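/- arXiv:2509.24119 — 4 statements merged into one kernel-verified Lean document; each statement's English description precedes it below -/
import Mathlib

section
/- Let ψ be a Grössencharacter of E of modulus m and weight ℓ ≥ 1. Then the value field L_ψ is a finite extension of ℚ and contains E as a subfield. -/
noncomputable section

open NumberField IntermediateField
open scoped nonZeroDivisors

/-- `E` is an imaginary quadratic subfield of `ℂ`: `[E : ℚ] = 2` and `E ⊄ ℝ`. -/
def IsImagQuad (E : IntermediateField ℚ ℂ) : Prop :=
  Module.finrank ℚ E = 2 ∧ ∃ z : E, (z : ℂ).im ≠ 0

variable (E : IntermediateField ℚ ℂ)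

/-- A fractional ideal `J` of `E` is coprime to the modulus `m` if it is a quotient `a/b` of
integral ideals `a`, `b` each coprime to `m`. -/
def FracCoprime (m : Ideal (𝓞 E)) (J : FractionalIdeal (𝓞 E)⁰ E) : Prop :=
  ∃ a b : Ideal (𝓞 E), IsCoprime a m ∧ IsCoprime b m ∧
    J * (b : FractionalIdeal (𝓞 E)⁰ E) = (a : FractionalIdeal (𝓞 E)⁰ E)

/-- A Grössencharacter of `E` of modulus `m` and weight `ℓ`: a homomorphism from the group of
fractional ideals of `E` coprime to `m` to `ℂˣ` such that `ψ(αO_E) = α ^ ℓ` whenever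
`α O_E` is coprime to `m` and `α ≡ 1 mod m`.  (The function is recorded on all fractional
ideals; only its values on those coprime to `m` are constrained or ever used.) -/
structure Grossenchar (m : Ideal (𝓞 E)) (ℓ : ℕ) where
  toFun : FractionalIdeal (𝓞 E)⁰ E → ℂ
  map_one' : toFun 1 = 1
  ne_zero' : ∀ J, FracCoprime E m J → toFun J ≠ 0
  map_mul' : ∀ J J', FracCoprime E m J → FracCoprime E m J' →
    toFun (J * J') = toFun J * toFun J'
  princ' : ∀ α : 𝓞 E, IsCoprime (Ideal.span {α}) m → α - 1 ∈ m →
    toFun ((Ideal.span {α} : Ideal (𝓞 E)) : FractionalIdeal (𝓞 E)⁰ E) = ((α : E) : ℂ) ^ ℓ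

namespace Grossenchar

variable {E} {m : Ideal (𝓞 E)} {ℓ : ℕ}

/-- The value field of a Grössencharacter: the subfield of `ℂ` generated by the image of `ψ`
(i.e. by its values on the fractional ideals coprime to the modulus). -/
def valueField (ψ : Grossenchar E m ℓ) : IntermediateField ℚ ℂ :=
  IntermediateField.adjoin ℚ (ψ.toFun '' {J | FracCoprime E m J})

end Grossenchar

set_option synthInstance.maxHeartbeats 1000000
set_option maxHeartbeats 1000000

section Aux

variable {E : IntermediateField ℚ ℂ} {m : Ideal (𝓞 E)} {ℓ : ℕ}

theorem FracCoprime.coeIdeal {a : Ideal (𝓞 E)} (h : IsCoprime a m) :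
    FracCoprime E m (a : FractionalIdeal (𝓞 E)⁰ E) :=
  ⟨a, 1, h, isCoprime_one_left, by simp [Ideal.one_eq_top]⟩

theorem Grossenchar.map_coe_mul (ψ : Grossenchar E m ℓ) {a b : Ideal (𝓞 E)}
    (ha : IsCoprime a m) (hb : IsCoprime b m) :
    ψ.toFun ((a * b : Ideal (𝓞 E)) : FractionalIdeal (𝓞 E)⁰ E) =
      ψ.toFun (a : FractionalIdeal (𝓞 E)⁰ E) * ψ.toFun (b : FractionalIdeal (𝓞 E)⁰ E) := by
  rw [FractionalIdeal.coeIdeal_mul]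
  exact ψ.map_mul' _ _ (.coeIdeal ha) (.coeIdeal hb)

theorem Grossenchar.map_coe_pow (ψ : Grossenchar E m ℓ) {a : Ideal (𝓞 E)}
    (ha : IsCoprime a m) (k : ℕ) :
    ψ.toFun ((a ^ k : Ideal (𝓞 E)) : FractionalIdeal (𝓞 E)⁰ E) =
      ψ.toFun (a : FractionalIdeal (𝓞 E)⁰ E) ^ k := by
  induction k with
  | zero => simpa [Ideal.one_eq_top] using ψ.map_one'
  | succ k ih =>
    rw [pow_succ, ψ.map_coe_mul (ha.pow_left) ha, ih, pow_succ]

theorem Grossenchar.m_ne_top (hℓ : 1 ≤ ℓ) (ψ : Grossenchar E m ℓ) : m ≠ ⊤ := by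
  intro h
  subst h
  have h1 : IsCoprime (Ideal.span {(0 : 𝓞 E)}) (⊤ : Ideal (𝓞 E)) := by
    rw [← Ideal.one_eq_top]; exact isCoprime_one_right
  have h2 := ψ.princ' 0 h1 (by simp)
  refine ψ.ne_zero' _ (FracCoprime.coeIdeal h1) ?_
  rw [h2]
  simp only [map_zero]
  exact zero_pow (by omega)

end Aux

section Dedekind
open UniqueFactorizationMonoid
variable {R : Type*} [CommRing R] [IsDedekindDomain R]

/-- mini: `α - 1 ∈ m` implies `span {α}` is coprime to `m`. -/
theorem coprime_span_of_sub_one_mem {m : Ideal R} {α : R} (h : α - 1 ∈ m) :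
    IsCoprime (Ideal.span {α}) m := by
  rw [Ideal.isCoprime_iff_sup_eq, eq_top_iff]
  intro x _
  have h1 : x * α - x * (α - 1) = x := by ring
  have : x * α ∈ Ideal.span {α} ⊔ m :=
    Ideal.mem_sup_left (Ideal.mem_span_singleton'.mpr ⟨x, rfl⟩)
  have h2 : x * (α - 1) ∈ Ideal.span {α} ⊔ m := Ideal.mem_sup_right (Ideal.mul_mem_left _ _ h)
  simpa [h1] using sub_mem this h2

/-- every class of ideals has a representative giving a principal multiple, coprime to m -/
theorem exists_coprime_compl (I m : Ideal R) (hI : I ≠ 0) (hm0 : m ≠ 0) (hmT : m ≠ ⊤) :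
    ∃ (C : Ideal R) (x : R), x ≠ 0 ∧ IsCoprime C m ∧ I * C = Ideal.span {x} := by
  classical
  have hIm : I * m ≠ 0 := mul_ne_zero hI hm0
  set s : Finset (Ideal R) := (normalizedFactors (I * m)).toFinset with hs
  have hprime : ∀ P ∈ s, Prime P := fun P hP =>
    prime_of_normalized_factor P (Multiset.mem_toFinset.mp hP)
  set v : Ideal R → ℕ := fun P => (normalizedFactors I).count P with hv
  -- choose elements with exact valuation at primes dividing m
  have hex : ∀ P : Ideal R, ∃ aP : R, P ∈ s →
      (aP ∈ P ^ v P ∧ (P ∣ m → aP ∉ P ^ (v P + 1))) := by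
    intro P
    by_cases hPs : P ∈ s
    · by_cases hPm : P ∣ m
      · have hP := hprime P hPs
        have hne : (P : Ideal R) ^ (v P + 1) ≠ P ^ v P := by
          intro h
          have : P ^ v P * P = P ^ v P * 1 := by
            rw [mul_one, ← pow_succ, h]
          have hP0 : P ^ v P ≠ 0 := pow_ne_zero _ hP.ne_zero
          exact hP.not_unit (Ideal.isUnit_iff.mpr (by
            simpa using (mul_left_cancel₀ hP0 this)))
        have hle : (P : Ideal R) ^ (v P + 1) ≤ P ^ v P :=
          Ideal.pow_le_pow_right (Nat.le_succ _)
        obtain ⟨a, haP, haP'⟩ := SetLike.exists_of_lt (lt_of_le_of_ne hle hne)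
        exact ⟨a, fun _ => ⟨haP, fun _ => haP'⟩⟩
      · exact ⟨0, fun _ => ⟨Submodule.zero_mem _, fun h => absurd h hPm⟩⟩
    · exact ⟨0, fun h => absurd h hPs⟩
  choose a ha using hex
  -- CRT
  obtain ⟨y, hy⟩ := IsDedekindDomain.exists_forall_sub_mem_ideal (s := s) id (fun P => v P + 1)
    hprime (fun i _ j _ h => h) (fun P => a P.1)
  have hymem : ∀ P ∈ s, y ∈ P ^ v P := by
    intro P hP
    have h1 := hy P hP
    have h2 := (ha P hP).1
    have : y - a P ∈ P ^ v P := Ideal.pow_le_pow_right (Nat.le_succ _) h1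
    simpa using add_mem this h2
  -- a prime dividing m
  obtain ⟨P₀, hP₀irr, hP₀m⟩ := WfDvdMonoid.exists_irreducible_factor
    (fun h => hmT (Ideal.isUnit_iff.mp h)) hm0
  have hP₀ : Prime P₀ := irreducible_iff_prime.mp hP₀irr
  have hP₀s : P₀ ∈ s := by
    rw [hs, Multiset.mem_toFinset, mem_normalizedFactors_iff hIm]
    exact ⟨hP₀, hP₀m.trans (dvd_mul_left m I)⟩
  have hy0 : y ≠ 0 := by
    intro h
    have h1 := hy P₀ hP₀s
    rw [h, zero_sub] at h1
    exact (ha P₀ hP₀s).2 hP₀m (by simpa using neg_mem h1)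
  -- I divides span y
  have hIdvd : I ∣ Ideal.span {y} := by
    have hfact : I = ∏ P ∈ (normalizedFactors I).toFinset, P ^ v P := by
      conv_lhs => rw [← associated_iff_eq.mp (prod_normalizedFactors hI)]
      exact (Finset.prod_multiset_count (normalizedFactors I)).symm ▸ rfl
    rw [hfact]
    refine Finset.prod_dvd_of_coprime ?_ ?_
    · intro P hP Q hQ hPQ
      have hPp := prime_of_normalized_factor P (Multiset.mem_toFinset.mp hP)
      have hQp := prime_of_normalized_factor Q (Multiset.mem_toFinset.mp hQ)
      have hPmax : P.IsMaximal := (Ideal.isPrime_of_prime hPp).isMaximal hPp.ne_zero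
      have hQmax : Q.IsMaximal := (Ideal.isPrime_of_prime hQp).isMaximal hQp.ne_zero
      exact (Ideal.isCoprime_iff_sup_eq.mpr (Ideal.IsMaximal.coprime_of_ne hPmax hQmax hPQ)).pow
    · intro P hP
      have hPs : P ∈ s := by
        rw [hs, Multiset.mem_toFinset, mem_normalizedFactors_iff hIm]
        rw [Multiset.mem_toFinset, mem_normalizedFactors_iff hI] at hP
        exact ⟨hP.1, hP.2.trans (dvd_mul_right I m)⟩
      rw [Ideal.dvd_iff_le, Ideal.span_singleton_le_iff_mem]
      exact hymem P hPs
  obtain ⟨C, hC⟩ := hIdvd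
  refine ⟨C, y, hy0, ?_, hC.symm⟩
  -- coprimality of C and m
  refine Ideal.coprime_of_no_prime_ge ?_
  rintro P hCP hmP hPprime
  have hPne : P ≠ ⊥ := by
    intro h; rw [h, le_bot_iff] at hmP; exact hm0 hmP
  have hPp : Prime P := Ideal.prime_of_isPrime hPne hPprime
  have hPm : P ∣ m := Ideal.dvd_iff_le.mpr hmP
  have hPs : P ∈ s := by
    rw [hs, Multiset.mem_toFinset, mem_normalizedFactors_iff hIm]
    exact ⟨hPp, hPm.trans (dvd_mul_left m I)⟩
  -- P^(v P) ∣ I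
  have hvI : P ^ v P ∣ I := by
    conv_rhs => rw [← associated_iff_eq.mp (prod_normalizedFactors hI)]
    calc (P ^ v P : Ideal R) = (Multiset.replicate (v P) P).prod := by
          rw [Multiset.prod_replicate]
      _ ∣ (normalizedFactors I).prod :=
          Multiset.prod_dvd_prod_of_le (Multiset.le_count_iff_replicate_le.mp le_rfl)
  have hyP : y ∈ P ^ (v P + 1) := by
    have h1 : I * P ∣ Ideal.span {y} := by
      rw [hC]
      exact mul_dvd_mul_left I (Ideal.dvd_iff_le.mpr hCP)
    have h2 : P ^ (v P + 1) ∣ Ideal.span {y} := by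
      refine dvd_trans ?_ h1
      rw [pow_succ]
      exact mul_dvd_mul hvI dvd_rfl
    rw [Ideal.dvd_iff_le, Ideal.span_singleton_le_iff_mem] at h2
    exact h2
  have haP : a P ∈ P ^ (v P + 1) := by
    have h1 := hy P hPs
    simpa using sub_mem hyP h1
  exact (ha P hPs).2 hPm haP

end Dedekind

section Aux2

variable {E : IntermediateField ℚ ℂ} {m : Ideal (𝓞 E)} {ℓ : ℕ}

theorem coprime_span_of_sub_one_mem' {m : Ideal (𝓞 E)} {α : 𝓞 E} (h : α - 1 ∈ m) :
    IsCoprime (Ideal.span {α}) m := by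
  rw [Ideal.isCoprime_iff_sup_eq, eq_top_iff]
  intro x _
  have h1 : x * α - x * (α - 1) = x := by ring
  have h2 : x * α ∈ Ideal.span {α} ⊔ m :=
    Ideal.mem_sup_left (Ideal.mem_span_singleton'.mpr ⟨x, rfl⟩)
  have h3 : x * (α - 1) ∈ Ideal.span {α} ⊔ m := Ideal.mem_sup_right (Ideal.mul_mem_left _ _ h)
  simpa [h1] using sub_mem h2 h3

theorem Grossenchar.isIntegral_val [NumberField E] (hm0 : m ≠ ⊥) (ψ : Grossenchar E m ℓ)
    {a : Ideal (𝓞 E)} (ha : IsCoprime a m) (ha0 : a ≠ 0) :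
    IsIntegral ℚ (ψ.toFun (a : FractionalIdeal (𝓞 E)⁰ E)) := by
  classical
  set h := Fintype.card (ClassGroup (𝓞 E)) with hh
  have hhpos : 0 < h := Fintype.card_pos
  have hmem : a ∈ (Ideal (𝓞 E))⁰ := mem_nonZeroDivisors_of_ne_zero ha0
  have hpowmem : a ^ h ∈ (Ideal (𝓞 E))⁰ := pow_mem hmem h
  have hsub : (⟨a ^ h, hpowmem⟩ : (Ideal (𝓞 E))⁰) = ⟨a, hmem⟩ ^ h := by
    ext; simp
  have hprin : (a ^ h).IsPrincipal := by
    rw [← ClassGroup.mk0_eq_one_iff hpowmem, hsub, map_pow, pow_card_eq_one]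
  obtain ⟨γ, hγ⟩ := hprin.principal
  rw [Ideal.submodule_span_eq] at hγ
  have hγcop : IsCoprime (Ideal.span {γ}) m := hγ ▸ ha.pow_left
  obtain ⟨i, hi, j, hj, hij⟩ := Ideal.isCoprime_iff_exists.mp hγcop
  obtain ⟨w, hw⟩ := Ideal.mem_span_singleton'.mp hi
  haveI : Fintype (𝓞 E ⧸ m) := (haveI := Ideal.finiteQuotientOfFreeOfNeBot m hm0; Fintype.ofFinite _)
  set n := Nat.card (𝓞 E ⧸ m)ˣ with hn
  have hnpos : 0 < n := Nat.card_pos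
  have hu : IsUnit (Ideal.Quotient.mk m γ) := by
    refine IsUnit.of_mul_eq_one (Ideal.Quotient.mk m w) ?_
    rw [← map_mul, ← map_one (Ideal.Quotient.mk m)]
    rw [Ideal.Quotient.eq]
    have : γ * w - 1 = -j := by rw [← hij, mul_comm, hw]; ring
    rw [this]; exact neg_mem hj
  obtain ⟨u, hu'⟩ := hu
  have hun : u ^ n = 1 := pow_card_eq_one'
  have hγn : γ ^ n - 1 ∈ m := by
    have h2 : Ideal.Quotient.mk m (γ ^ n) = Ideal.Quotient.mk m 1 := by
      rw [map_pow, map_one, ← hu', ← Units.val_pow_eq_pow_val, hun, Units.val_one]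
    exact (Ideal.Quotient.eq).mp h2
  have hcop2 : IsCoprime (Ideal.span {γ ^ n}) m := coprime_span_of_sub_one_mem' hγn
  have hval := ψ.princ' (γ ^ n) hcop2 hγn
  have hpows : a ^ (h * n) = Ideal.span {γ ^ n} := by
    rw [pow_mul, hγ, Ideal.span_singleton_pow]
  have hval2 : ψ.toFun (a : FractionalIdeal (𝓞 E)⁰ E) ^ (h * n)
      = (((γ ^ n : 𝓞 E) : E) : ℂ) ^ ℓ := by
    rw [← ψ.map_coe_pow ha, hpows, hval]
  have hint : IsIntegral ℚ ((((γ ^ n : 𝓞 E) : E) : ℂ) ^ ℓ) := by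
    apply IsIntegral.pow
    have h3 : IsIntegral ℚ ((γ ^ n : 𝓞 E) : E) := IsIntegral.of_finite ℚ _
    exact h3.map E.val
  exact IsIntegral.of_pow (by positivity) (hval2 ▸ hint)

theorem Grossenchar.ray_rel [NumberField E] (hmT : m ≠ ⊤) (ψ : Grossenchar E m ℓ)
    {a a' K : Ideal (𝓞 E)} (hK : K ≠ 0) (hKc : IsCoprime K m)
    (ha : IsCoprime a m) (ha' : IsCoprime a' m) {y y' : 𝓞 E}
    (h1 : a * K = Ideal.span {y}) (h2 : a' * K = Ideal.span {y'})
    (hcong : Ideal.Quotient.mk m y = Ideal.Quotient.mk m y') :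
    ∃ e e' : 𝓞 E, (((e : E) : ℂ)) ≠ 0 ∧ (((e' : E) : ℂ)) ≠ 0 ∧
      ψ.toFun (a : FractionalIdeal (𝓞 E)⁰ E) * ((e' : E) : ℂ) ^ ℓ
        = ψ.toFun (a' : FractionalIdeal (𝓞 E)⁰ E) * ((e : E) : ℂ) ^ ℓ := by
  have hycop : IsCoprime (Ideal.span {y}) m := h1 ▸ ha.mul_left hKc
  obtain ⟨i, hi, j, hj, hij⟩ := Ideal.isCoprime_iff_exists.mp hycop
  obtain ⟨w, hw⟩ := Ideal.mem_span_singleton'.mp hi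
  have hαm : w * y - 1 ∈ m := by
    have h3 : w * y - 1 = -j := by rw [hw, ← hij]; ring
    rw [h3]; exact neg_mem hj
  have hα'm : w * y' - 1 ∈ m := by
    have hyy : y - y' ∈ m := (Ideal.Quotient.eq).mp hcong
    have h3 : w * y' - 1 = -(w * (y - y')) + (w * y - 1) := by ring
    rw [h3]
    exact add_mem (neg_mem (Ideal.mul_mem_left _ _ hyy)) hαm
  have hαcop : IsCoprime (Ideal.span {w * y}) m := coprime_span_of_sub_one_mem' hαm
  have hα'cop : IsCoprime (Ideal.span {w * y'}) m := coprime_span_of_sub_one_mem' hα'm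
  -- ideal identity
  have key : a * Ideal.span {w * y'} = a' * Ideal.span {w * y} := by
    have e1 : a * Ideal.span {y'} * K = a' * Ideal.span {y} * K := by
      calc a * Ideal.span {y'} * K = (a * K) * Ideal.span {y'} := by ring
        _ = Ideal.span {y} * Ideal.span {y'} := by rw [h1]
        _ = (a' * K) * Ideal.span {y} := by rw [h2]; ring
        _ = a' * Ideal.span {y} * K := by ring
    have e2 : a * Ideal.span {y'} = a' * Ideal.span {y} := mul_right_cancel₀ hK e1
    calc a * Ideal.span {w * y'} = a * (Ideal.span {y'} * Ideal.span {w}) := by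
          rw [Ideal.span_singleton_mul_span_singleton, mul_comm y' w]
      _ = a * Ideal.span {y'} * Ideal.span {w} := by ring
      _ = a' * Ideal.span {y} * Ideal.span {w} := by rw [e2]
      _ = a' * (Ideal.span {y} * Ideal.span {w}) := by ring
      _ = a' * Ideal.span {w * y} := by
          rw [Ideal.span_singleton_mul_span_singleton, mul_comm y w]
  have hψ : ψ.toFun (a : FractionalIdeal (𝓞 E)⁰ E) * (((w * y' : 𝓞 E) : E) : ℂ) ^ ℓ
      = ψ.toFun (a' : FractionalIdeal (𝓞 E)⁰ E) * (((w * y : 𝓞 E) : E) : ℂ) ^ ℓ := by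
    have h4 := congrArg (fun I : Ideal (𝓞 E) => ψ.toFun (I : FractionalIdeal (𝓞 E)⁰ E)) key
    rw [ψ.map_coe_mul ha hα'cop, ψ.map_coe_mul ha' hαcop,
      ψ.princ' _ hα'cop hα'm, ψ.princ' _ hαcop hαm] at h4
    exact h4
  have hαne : ∀ β : 𝓞 E, β - 1 ∈ m → (((β : E) : ℂ)) ≠ 0 := by
    intro β hβ h0
    have h5 : (β : E) = 0 := by exact_mod_cast h0
    have hβ0 : β = 0 := by exact_mod_cast h5
    rw [hβ0] at hβ
    apply hmT
    rw [Ideal.eq_top_iff_one]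
    simpa using neg_mem hβ
  exact ⟨w * y, w * y', hαne _ hαm, hαne _ hα'm, hψ⟩

end Aux2

section Aux3

theorem exists_nonreal_pow {c : ℂ} (hc : c.im ≠ 0) {ℓ : ℕ} (hℓ : 1 ≤ ℓ) :
    ∃ k : ℕ, ((1 + (k : ℂ) * c) ^ ℓ).im ≠ 0 := by
  by_contra hcon
  push_neg at hcon
  have him : ∀ k : ℕ, ((1 : ℂ) + (k : ℂ) * c).im = (k : ℝ) * c.im := by
    intro k; simp
  have hz : ∀ k : ℕ, (1 + (k : ℂ) * c) ≠ 0 := by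
    intro k h0
    by_cases hk : k = 0
    · rw [hk] at h0; norm_num at h0
    · have h2 := congrArg Complex.im h0
      rw [him k, Complex.zero_im] at h2
      rcases mul_eq_zero.mp h2 with h | h
      · exact hk (by simpa using h)
      · exact hc h
  set f : ℕ → ℂ := fun k => (1 + (k : ℂ) * c) / (starRingEnd ℂ) (1 + (k : ℂ) * c) with hf
  have hroot : ∀ k, f k ^ ℓ = 1 := by
    intro k
    have h1 : (starRingEnd ℂ) ((1 + (k : ℂ) * c) ^ ℓ) = (1 + (k : ℂ) * c) ^ ℓ :=
      Complex.conj_eq_iff_im.mpr (hcon k)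
    rw [hf]
    simp only [div_pow, ← map_pow]
    rw [h1, div_self (pow_ne_zero _ (hz k))]
  have hinj : Function.Injective f := by
    intro k k' hkk'
    have hconj : ∀ j : ℕ, (starRingEnd ℂ) (1 + (j : ℂ) * c) = 1 + (j : ℂ) * (starRingEnd ℂ) c := by
      intro j; simp
    have hden : ∀ j : ℕ, (starRingEnd ℂ) (1 + (j : ℂ) * c) ≠ 0 := by
      intro j h0
      exact hz j (by simpa using congrArg (starRingEnd ℂ) h0)
    rw [hf] at hkk'
    simp only [div_eq_div_iff (hden k) (hden k')] at hkk'
    rw [hconj k, hconj k'] at hkk'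
    have hkey : ((k : ℂ) - (k' : ℂ)) * (c - (starRingEnd ℂ) c) = 0 := by
      linear_combination hkk'
    have hcc : c - (starRingEnd ℂ) c ≠ 0 := by
      intro h0
      exact hc (Complex.conj_eq_iff_im.mp (by linear_combination -h0))
    exact Nat.cast_inj.mp (sub_eq_zero.mp ((mul_eq_zero.mp hkey).resolve_right hcc))
  have hfin : Set.Finite {x : ℂ | (Polynomial.X ^ ℓ - Polynomial.C (1 : ℂ)).IsRoot x} :=
    Polynomial.finite_setOf_isRoot (Polynomial.monic_X_pow_sub_C (1 : ℂ) (by omega)).ne_zero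
  have hsub : Set.range f ⊆ {x : ℂ | (Polynomial.X ^ ℓ - Polynomial.C (1 : ℂ)).IsRoot x} := by
    rintro - ⟨k, rfl⟩
    simp [Polynomial.IsRoot, hroot k]
  exact (hfin.subset hsub).not_infinite (Set.infinite_range_of_injective hinj)

end Aux3

section PartA

variable {E : IntermediateField ℚ ℂ} {m : Ideal (𝓞 E)} {ℓ : ℕ}

theorem Grossenchar.le_valueField [NumberField E] (hE : IsImagQuad E) (hm : m ≠ 0)
    (hℓ : 1 ≤ ℓ) (ψ : Grossenchar E m ℓ) : E ≤ ψ.valueField := by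
  obtain ⟨hE2, z, hz⟩ := hE
  -- an integral element with nonzero imaginary part
  have halgQ : IsAlgebraic ℚ z := (IsIntegral.of_finite ℚ z).isAlgebraic
  have halg : IsAlgebraic ℤ z := (IsFractionRing.isAlgebraic_iff ℤ ℚ E).mpr halgQ
  obtain ⟨x, d, hd, hxd⟩ : ∃ x : integralClosure ℤ E, ∃ d ≠ (0 : ℤ), algebraMap ℤ E d * z = x := by
    obtain ⟨d, hd, hint⟩ := halg.exists_integral_multiple
    exact ⟨⟨d • z, hint⟩, d, hd, (Algebra.smul_def d z).symm⟩
  set β : 𝓞 E := ⟨(x : E), x.2⟩ with hβ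
  have hβim : ((β : E) : ℂ).im ≠ 0 := by
    have h1 : ((β : E) : ℂ) = (d : ℂ) * (z : ℂ) := by
      have hb : (β : E) = algebraMap ℤ E d * z := by rw [hxd]; rfl
      rw [hb, eq_intCast]
      push_cast
      ring
    rw [h1]
    simp only [Complex.mul_im, Complex.intCast_re, Complex.intCast_im, zero_mul, add_zero]
    exact mul_ne_zero (by exact_mod_cast hd) hz
  -- the modulus contains a nonzero natural number
  set t : ℕ := Ideal.absNorm m with ht
  have htm : ((t : 𝓞 E)) ∈ m := Ideal.absNorm_mem m
  have htn : t ≠ 0 := by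
    rw [ht, ne_eq, Ideal.absNorm_eq_zero_iff]
    exact hm
  set c₀ : 𝓞 E := (t : 𝓞 E) * β with hc₀
  have hc₀m : c₀ ∈ m := Ideal.mul_mem_right _ _ htm
  have hc : ((c₀ : E) : ℂ).im ≠ 0 := by
    have h1 : ((c₀ : E) : ℂ) = (t : ℂ) * ((β : E) : ℂ) := by
      rw [hc₀]; push_cast; ring
    rw [h1]
    simp only [Complex.mul_im, Complex.natCast_re, Complex.natCast_im, zero_mul, add_zero]
    exact mul_ne_zero (by exact_mod_cast htn) hβim
  obtain ⟨k, hk⟩ := exists_nonreal_pow hc hℓ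
  set α : 𝓞 E := 1 + (k : 𝓞 E) * c₀ with hα
  have hαm : α - 1 ∈ m := by
    have h1 : α - 1 = (k : 𝓞 E) * c₀ := by rw [hα]; ring
    rw [h1]; exact Ideal.mul_mem_left _ _ hc₀m
  have hαcop : IsCoprime (Ideal.span {α}) m := coprime_span_of_sub_one_mem' hαm
  have hval := ψ.princ' α hαcop hαm
  set e' : ℂ := ((α : E) : ℂ) ^ ℓ with he'
  have hcast : ((α : E) : ℂ) = 1 + (k : ℂ) * ((c₀ : E) : ℂ) := by
    rw [hα]; push_cast; ring
  have he'im : e'.im ≠ 0 := by rw [he', hcast]; exact hk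
  have he'L : e' ∈ ψ.valueField := by
    apply IntermediateField.subset_adjoin
    exact ⟨_, FracCoprime.coeIdeal hαcop, hval⟩
  have he'E : e' ∈ E := by
    have h1 : e' = (((α : E) ^ ℓ : E) : ℂ) := by rw [he']; push_cast; ring
    rw [h1]; exact SetLike.coe_mem _
  have hint : IsIntegral ℚ e' := by
    have h1 : IsIntegral ℚ ((α : E) ^ ℓ) := IsIntegral.of_finite ℚ _
    have h2 := h1.map E.val
    simpa [he'] using h2
  haveI := IntermediateField.adjoin.finiteDimensional hint
  have hle : ℚ⟮e'⟯ ≤ E := IntermediateField.adjoin_simple_le_iff.mpr he'E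
  have h1 : Module.finrank ℚ ℚ⟮e'⟯ ≠ 1 := by
    intro h
    rw [IntermediateField.finrank_eq_one_iff] at h
    have h2 := IntermediateField.mem_adjoin_simple_self ℚ e'
    rw [h, IntermediateField.mem_bot] at h2
    obtain ⟨q, hq⟩ := h2
    exact he'im (hq ▸ (by rw [eq_ratCast]; simp : ((algebraMap ℚ ℂ q).im = 0)))
  have h0 : 0 < Module.finrank ℚ ℚ⟮e'⟯ := Module.finrank_pos
  have h2 : 2 ≤ Module.finrank ℚ ℚ⟮e'⟯ := by omega
  have heq : ℚ⟮e'⟯ = E := IntermediateField.eq_of_le_of_finrank_le hle (by rw [hE2]; exact h2)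
  exact heq.symm.trans_le (IntermediateField.adjoin_simple_le_iff.mpr he'L)

end PartA

section PartB

variable {E : IntermediateField ℚ ℂ} {m : Ideal (𝓞 E)} {ℓ : ℕ}

theorem Grossenchar.finiteDimensional_valueField [NumberField E] (hm0 : m ≠ 0) (hmT : m ≠ ⊤)
    (ψ : Grossenchar E m ℓ) : FiniteDimensional ℚ ψ.valueField := by
  classical
  haveI : Fintype (𝓞 E ⧸ m) := (haveI := Ideal.finiteQuotientOfFreeOfNeBot m hm0; Fintype.ofFinite _)
  have hnz : ∀ {a : Ideal (𝓞 E)}, IsCoprime a m → a ≠ 0 := by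
    intro a ha h0
    rw [h0] at ha
    exact hmT (Ideal.isUnit_iff.mp (isCoprime_zero_left.mp ha))
  -- a "complementary" coprime ideal for each ideal class
  have hKex : ∀ c : ClassGroup (𝓞 E), ∃ K : Ideal (𝓞 E), K ≠ 0 ∧ IsCoprime K m ∧
      ∀ (a : Ideal (𝓞 E)) (ha : a ≠ 0),
        ClassGroup.mk0 ⟨a, mem_nonZeroDivisors_of_ne_zero ha⟩ = c →
        ∃ y : 𝓞 E, a * K = Ideal.span {y} := by
    intro c
    obtain ⟨I, hI⟩ := ClassGroup.mk0_surjective c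
    have hI0 : (I : Ideal (𝓞 E)) ≠ 0 := mem_nonZeroDivisors_iff_ne_zero.mp I.2
    obtain ⟨C, x, hx0, hCcop, hIC⟩ := exists_coprime_compl (I : Ideal (𝓞 E)) m hI0 hm0 hmT
    have hC0 : C ≠ 0 := by
      intro h0
      rw [h0, mul_zero] at hIC
      exact hx0 (by simpa using (Ideal.span_singleton_eq_bot).mp hIC.symm)
    have hCmem : C ∈ (Ideal (𝓞 E))⁰ := mem_nonZeroDivisors_of_ne_zero hC0
    have hICprin : ClassGroup.mk0 ⟨(I : Ideal (𝓞 E)) * C,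
        mul_mem I.2 hCmem⟩ = 1 := by
      rw [ClassGroup.mk0_eq_one_iff]
      exact ⟨⟨x, by rw [hIC, Ideal.submodule_span_eq]⟩⟩
    have hCinv : ClassGroup.mk0 ⟨C, hCmem⟩ = c⁻¹ := by
      have h1 : (⟨(I : Ideal (𝓞 E)) * C, mul_mem I.2 hCmem⟩ : (Ideal (𝓞 E))⁰)
          = I * ⟨C, hCmem⟩ := rfl
      rw [h1, map_mul, hI] at hICprin
      exact eq_inv_of_mul_eq_one_left (by rw [mul_comm]; exact hICprin)
    refine ⟨C, hC0, hCcop, ?_⟩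
    intro a ha hc
    have hmul : ClassGroup.mk0 ⟨a * C, mul_mem (mem_nonZeroDivisors_of_ne_zero ha) hCmem⟩
        = 1 := by
      have h1 : (⟨a * C, _⟩ : (Ideal (𝓞 E))⁰)
          = ⟨a, mem_nonZeroDivisors_of_ne_zero ha⟩ * ⟨C, hCmem⟩ := rfl
      rw [h1, map_mul, hc, hCinv, mul_inv_cancel]
    rw [ClassGroup.mk0_eq_one_iff] at hmul
    obtain ⟨y, hy⟩ := hmul.principal
    exact ⟨y, by rw [hy, Ideal.submodule_span_eq]⟩
  choose K hK0 hKcop hKprin using hKex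
  -- fingerprints
  set Rel : Ideal (𝓞 E) → (ClassGroup (𝓞 E) × (𝓞 E ⧸ m)) → Prop := fun a q =>
    ∃ y : 𝓞 E, a * K q.1 = Ideal.span {y} ∧ Ideal.Quotient.mk m y = q.2 with hRelDef
  have hRel : ∀ a : Ideal (𝓞 E), IsCoprime a m →
      ∃ q, Rel a q := by
    intro a ha
    have ha0 := hnz ha
    obtain ⟨y, hy⟩ := hKprin (ClassGroup.mk0 ⟨a, mem_nonZeroDivisors_of_ne_zero ha0⟩) a ha0 rfl
    exact ⟨(_, Ideal.Quotient.mk m y), y, hy, rfl⟩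
  set A : (ClassGroup (𝓞 E) × (𝓞 E ⧸ m)) → Set (Ideal (𝓞 E)) := fun q =>
    {a | IsCoprime a m ∧ Rel a q} with hA
  set r : (ClassGroup (𝓞 E) × (𝓞 E ⧸ m)) → ℂ := fun q =>
    if h : (A q).Nonempty then ψ.toFun ((h.choose : Ideal (𝓞 E)) : FractionalIdeal (𝓞 E)⁰ E)
    else 1 with hr
  have hrint : ∀ q, IsIntegral ℚ (r q) := by
    intro q
    by_cases h : (A q).Nonempty
    · simp only [hr, dif_pos h]
      exact ψ.isIntegral_val hm0 h.choose_spec.1 (hnz h.choose_spec.1)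
    · simp only [hr, dif_neg h]
      exact isIntegral_one
  set T : Set ℂ := Set.range r with hT
  haveI hTfin : Finite T := (Set.finite_range r).to_subtype
  set F : IntermediateField ℚ ℂ := E ⊔ IntermediateField.adjoin ℚ T with hF
  haveI : FiniteDimensional ℚ (IntermediateField.adjoin ℚ T) :=
    IntermediateField.finiteDimensional_adjoin (fun x hx => by
      obtain ⟨q, rfl⟩ := hx; exact hrint q)
  haveI hFfd : FiniteDimensional ℚ F := by
    rw [hF]; infer_instance
  have hEF : ∀ x : 𝓞 E, ((x : E) : ℂ) ∈ F := by
    intro x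
    exact (le_sup_left : E ≤ F) (SetLike.coe_mem (x : E))
  have hTF : T ⊆ (F : Set ℂ) := by
    intro x hx
    exact (le_sup_right : IntermediateField.adjoin ℚ T ≤ F)
      (IntermediateField.subset_adjoin ℚ T hx)
  -- values on integral coprime ideals lie in F
  have hIntVal : ∀ a : Ideal (𝓞 E), IsCoprime a m →
      ψ.toFun (a : FractionalIdeal (𝓞 E)⁰ E) ∈ F := by
    intro a ha
    obtain ⟨q, hq⟩ := hRel a ha
    have hne : (A q).Nonempty := ⟨a, ha, hq⟩
    have ha' : hne.choose ∈ A q := hne.choose_spec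
    obtain ⟨y, hy1, hy2⟩ := hq
    obtain ⟨y', hy1', hy2'⟩ := ha'.2
    obtain ⟨e, e', he, he', heq⟩ := ψ.ray_rel hmT (hK0 q.1) (hKcop q.1) ha ha'.1 hy1 hy1'
      (by rw [hy2, hy2'])
    have hra' : ψ.toFun ((hne.choose : Ideal (𝓞 E)) : FractionalIdeal (𝓞 E)⁰ E) = r q := by
      simp only [hr, dif_pos hne]
    have hval : ψ.toFun (a : FractionalIdeal (𝓞 E)⁰ E)
        = r q * ((e : E) : ℂ) ^ ℓ * (((e' : E) : ℂ) ^ ℓ)⁻¹ := by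
      rw [← hra']
      have hpow : ((e' : E) : ℂ) ^ ℓ ≠ 0 := pow_ne_zero _ he'
      field_simp
      linear_combination heq
    rw [hval]
    exact mul_mem (mul_mem (hTF ⟨q, rfl⟩) (pow_mem (hEF e) ℓ)) (inv_mem (pow_mem (hEF e') ℓ))
  have hAllVal : ∀ J, FracCoprime E m J → ψ.toFun J ∈ F := by
    intro J hJ
    obtain ⟨a, b, ha, hb, hab⟩ := hJ
    have h1 : ψ.toFun (J * (b : FractionalIdeal (𝓞 E)⁰ E))
        = ψ.toFun J * ψ.toFun (b : FractionalIdeal (𝓞 E)⁰ E) :=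
      ψ.map_mul' J _ ⟨a, b, ha, hb, hab⟩ (.coeIdeal hb)
    rw [hab] at h1
    have hbne : ψ.toFun ((b : Ideal (𝓞 E)) : FractionalIdeal (𝓞 E)⁰ E) ≠ 0 :=
      ψ.ne_zero' _ (.coeIdeal hb)
    have h2 : ψ.toFun J = ψ.toFun ((a : Ideal (𝓞 E)) : FractionalIdeal (𝓞 E)⁰ E)
        * (ψ.toFun ((b : Ideal (𝓞 E)) : FractionalIdeal (𝓞 E)⁰ E))⁻¹ := by
      field_simp
      linear_combination -h1
    rw [h2]
    exact mul_mem (hIntVal a ha) (inv_mem (hIntVal b hb))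
  have hle : ψ.valueField ≤ F := by
    rw [Grossenchar.valueField, IntermediateField.adjoin_le_iff]
    rintro - ⟨J, hJ, rfl⟩
    exact hAllVal J hJ
  have hinj : Function.Injective (IntermediateField.inclusion hle) :=
    (IntermediateField.inclusion hle).toRingHom.injective
  exact FiniteDimensional.of_injective (IntermediateField.inclusion hle).toLinearMap hinj

end PartB

/-- Condition (★): the modulus character of `ψ` restricts on `ℤ` to the quadratic character
attached to `E`; concretely, for every rational prime `p ∤ Δ_E` with `pO_E` coprime to `m`,
`ψ(pO_E) = p^ℓ` if `p` is split in `E` and `ψ(pO_E) = -p^ℓ` if `p` is inert in `E`. -/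
def Grossenchar.Star {E : IntermediateField ℚ ℂ} [NumberField E] {m : Ideal (𝓞 E)} {ℓ : ℕ}
    (ψ : Grossenchar E m ℓ) : Prop :=
  ∀ p : ℕ, p.Prime → ¬ ((p : ℤ) ∣ NumberField.discr E) →
    IsCoprime (Ideal.span {(p : 𝓞 E)}) m →
    ((∃ P Q : Ideal (𝓞 E), P.IsPrime ∧ Q.IsPrime ∧ P ≠ Q ∧
        Ideal.span {(p : 𝓞 E)} = P * Q) →
      ψ.toFun ((Ideal.span {(p : 𝓞 E)} : Ideal (𝓞 E)) : FractionalIdeal (𝓞 E)⁰ E)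
        = (p : ℂ) ^ ℓ) ∧
    ((Ideal.span {(p : 𝓞 E)}).IsPrime →
      ψ.toFun ((Ideal.span {(p : 𝓞 E)} : Ideal (𝓞 E)) : FractionalIdeal (𝓞 E)⁰ E)
        = -((p : ℂ) ^ ℓ))

/-- The modulus character of `ψ` is quadratic: `ψ(αO_E)² = α^{2ℓ}` for all `α ∈ O_E` with
`αO_E` coprime to `m`. -/
def Grossenchar.QuadModChar {E : IntermediateField ℚ ℂ} {m : Ideal (𝓞 E)} {ℓ : ℕ}
    (ψ : Grossenchar E m ℓ) : Prop :=
  ∀ α : 𝓞 E, IsCoprime (Ideal.span {α}) m →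
    ψ.toFun ((Ideal.span {α} : Ideal (𝓞 E)) : FractionalIdeal (𝓞 E)⁰ E) ^ 2
      = ((α : E) : ℂ) ^ (2 * ℓ)

/-- `r` is the order of the modulus character of `ψ`: the least `r ≥ 1` such that
`ψ(αO_E)^r = α^{rℓ}` for all `α ∈ O_E` with `αO_E` coprime to `m`. -/
def Grossenchar.ModCharOrder {E : IntermediateField ℚ ℂ} {m : Ideal (𝓞 E)} {ℓ : ℕ}
    (ψ : Grossenchar E m ℓ) (r : ℕ) : Prop :=
  1 ≤ r ∧
  (∀ α : 𝓞 E, IsCoprime (Ideal.span {α}) m →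
    ψ.toFun ((Ideal.span {α} : Ideal (𝓞 E)) : FractionalIdeal (𝓞 E)⁰ E) ^ r
      = ((α : E) : ℂ) ^ (r * ℓ)) ∧
  ∀ r' : ℕ, 1 ≤ r' →
    (∀ α : 𝓞 E, IsCoprime (Ideal.span {α}) m →
      ψ.toFun ((Ideal.span {α} : Ideal (𝓞 E)) : FractionalIdeal (𝓞 E)⁰ E) ^ r'
        = ((α : E) : ℂ) ^ (r' * ℓ)) → r ≤ r'

/-- The ideal `𝔡_E`: `𝔇` if `Δ_E` is odd, `𝔭₂𝔇` if `Δ_E ≡ 4 (mod 8)`, and `2𝔇` if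
`Δ_E ≡ 0 (mod 8)`, where `𝔇 = differentIdeal ℤ (𝓞 E)` and `𝔭₂` is the unique prime above `2`
(obtained as the radical of `2𝓞 E`, since `2` ramifies when `Δ_E` is even). -/
def dIdeal (E : IntermediateField ℚ ℂ) [NumberField E] : Ideal (𝓞 E) :=
  if ¬ (2 ∣ NumberField.discr E) then differentIdeal ℤ (𝓞 E)
  else if NumberField.discr E % 8 = 4 then
    (Ideal.span {(2 : 𝓞 E)}).radical * differentIdeal ℤ (𝓞 E)
  else Ideal.span {(2 : 𝓞 E)} * differentIdeal ℤ (𝓞 E)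

/-- `ψ` is primitive: its defining property does not factor through any proper divisor of the
modulus. -/
def Grossenchar.Primitive {E : IntermediateField ℚ ℂ} {m : Ideal (𝓞 E)} {ℓ : ℕ}
    (ψ : Grossenchar E m ℓ) : Prop :=
  ¬ ∃ m' : Ideal (𝓞 E), m' ∣ m ∧ m' ≠ m ∧
    ∀ α : 𝓞 E, IsCoprime (Ideal.span {α}) m → α - 1 ∈ m' →
      ψ.toFun ((Ideal.span {α} : Ideal (𝓞 E)) : FractionalIdeal (𝓞 E)⁰ E) = ((α : E) : ℂ) ^ ℓ

/-- The value field of a Grössencharacter of an imaginary quadratic field `E`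
of modulus `m` and weight `ℓ ≥ 1` is a finite extension of `ℚ` containing `E`. -/
theorem stmt_0 (E : IntermediateField ℚ ℂ) (hE : IsImagQuad E)
    (m : Ideal (𝓞 E)) (hm : m ≠ 0) (ℓ : ℕ) (hℓ : 1 ≤ ℓ)
    (ψ : Grossenchar E m ℓ) :
    E ≤ ψ.valueField ∧ FiniteDimensional ℚ ψ.valueField := by
  classical
  have hE2 := hE.1
  haveI hfd : FiniteDimensional ℚ E := Module.finite_of_finrank_pos (by rw [hE2]; norm_num)
  haveI : NumberField E := ⟨⟩
  have hmT : m ≠ ⊤ := ψ.m_ne_top hℓ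
  exact ⟨ψ.le_valueField hE hm hℓ, ψ.finiteDimensional_valueField hm hmT⟩
end
end

section
/- Let ψ be a Grössencharacter of E of modulus m and weight ℓ ≥ 1, with value field L = L_ψ, and let O_L be the integral closure of ℤ in L. Then for every nonzero ideal 𝔞 of O_E, the ideal of O_L generated by 𝔞 satisfies: (𝔞O_L)^ℓ is a principal ideal of O_L. Equivalently, the class of 𝔞O_L in the ideal class group of L has order dividing ℓ. -/
noncomputable section

open NumberField IntermediateField
open scoped nonZeroDivisors

variable (E : IntermediateField ℚ ℂ)

set_option synthInstance.maxHeartbeats 1000000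
set_option maxHeartbeats 2000000

open UniqueFactorizationMonoid

section AuxDedekind

variable {R : Type*} [CommRing R] [IsDedekindDomain R]

theorem aux_isPrincipal_of_mul_span {I : Ideal R} {c d : R} (hc : c ≠ 0)
    (h : I * Ideal.span {c} = Ideal.span {d}) : I.IsPrincipal := by
  rw [mul_comm] at h
  have hd : d ∈ Ideal.span {c} * I := by rw [h]; exact Ideal.mem_span_singleton_self d
  obtain ⟨i, hiI, hci⟩ := Ideal.mem_span_singleton_mul.mp hd
  refine ⟨i, le_antisymm ?_ ?_⟩
  · intro j hj
    have h2 : c * j ∈ Ideal.span {c} * I := Ideal.mul_mem_mul (Ideal.mem_span_singleton_self c) hj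
    rw [h, Ideal.mem_span_singleton] at h2
    obtain ⟨r, hr⟩ := h2
    have h3 : c * j = c * (i * r) := by rw [hr, ← hci]; ring
    have h4 := mul_left_cancel₀ hc h3
    show j ∈ Ideal.span {i}
    rw [Ideal.mem_span_singleton]
    exact ⟨r, h4⟩
  · show Ideal.span {i} ≤ I
    rw [Ideal.span_le, Set.singleton_subset_iff]; exact hiI

theorem aux_pow_inj {I J : Ideal R} {n : ℕ} (hn : n ≠ 0) (h : I ^ n = J ^ n) : I = J := by
  rcases eq_or_ne I 0 with rfl | hI
  · rw [zero_pow hn, eq_comm, pow_eq_zero_iff hn] at h; rw [h]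
  rcases eq_or_ne J 0 with rfl | hJ
  · rw [zero_pow hn, pow_eq_zero_iff hn] at h; rw [h]
  classical
  have hfac : normalizedFactors I = normalizedFactors J := by
    have h1 : n • normalizedFactors I = n • normalizedFactors J := by
      rw [← normalizedFactors_pow, ← normalizedFactors_pow, h]
    refine Multiset.ext.mpr fun a => ?_
    have := congrArg (Multiset.count a) h1
    rw [Multiset.count_nsmul, Multiset.count_nsmul] at this
    exact Nat.eq_of_mul_eq_mul_left (Nat.pos_of_ne_zero hn) this
  calc I = (normalizedFactors I).prod := (associated_iff_eq.mp (prod_normalizedFactors hI)).symm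
  _ = (normalizedFactors J).prod := by rw [hfac]
  _ = J := associated_iff_eq.mp (prod_normalizedFactors hJ)

theorem aux_exists_coprime_mul (m : Ideal R) (hm0 : m ≠ 0) (hmT : m ≠ ⊤)
    {𝔞 : Ideal R} (h𝔞 : 𝔞 ≠ 0) :
    ∃ (𝔠 : Ideal R) (x : R), IsCoprime 𝔠 m ∧ x ≠ 0 ∧ 𝔞 * 𝔠 = Ideal.span {x} := by
  classical
  set s := (normalizedFactors (𝔞 * m)).toFinset with hs
  have ham : 𝔞 * m ≠ 0 := mul_ne_zero h𝔞 hm0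
  have hprime : ∀ P ∈ s, Prime P := fun P hP =>
    prime_of_normalized_factor P (Multiset.mem_toFinset.mp hP)
  set n : Ideal R → ℕ := fun P => (normalizedFactors 𝔞).count P with hn
  have hex : ∀ P ∈ s, ∃ xP, xP ∈ P ^ n P ∧ xP ∉ P ^ (n P + 1) := by
    intro P hP
    have hPp := hprime P hP
    have hlt : P ^ (n P + 1) < P ^ n P := by
      refine lt_of_le_of_ne (Ideal.pow_le_pow_right (Nat.le_succ _)) ?_
      intro heq
      have h1 : P ^ n P * P = P ^ n P * 1 := by
        rw [mul_one, ← pow_succ]; exact heq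
      have h2 := mul_left_cancel₀ (pow_ne_zero _ hPp.ne_zero) h1
      exact hPp.not_unit (h2 ▸ isUnit_one)
    obtain ⟨x, hx1, hx2⟩ := SetLike.exists_of_lt hlt
    exact ⟨x, hx1, hx2⟩
  choose xf hx1 hx2 using hex
  obtain ⟨y, hy⟩ := IsDedekindDomain.exists_forall_sub_mem_ideal (s := s) id (fun P => n P + 1)
    hprime (fun i _ j _ hij => hij) (fun P => xf P P.2)
  simp only [id_eq] at hy
  have hyP : ∀ P (hP : P ∈ s), y ∈ P ^ n P := by
    intro P hP
    have h2 : y - xf P hP ∈ P ^ n P := Ideal.pow_le_pow_right (Nat.le_succ _) (hy P hP)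
    have h3 := add_mem h2 (hx1 P hP)
    simpa using h3
  have hyP' : ∀ P (hP : P ∈ s), y ∉ P ^ (n P + 1) := by
    intro P hP hcon
    exact hx2 P hP (by simpa using sub_mem hcon (hy P hP))
  have hsub : (normalizedFactors 𝔞).toFinset ⊆ s := by
    intro P hP
    rw [Multiset.mem_toFinset] at hP ⊢
    rw [mem_normalizedFactors_iff ham]
    exact ⟨prime_of_normalized_factor _ hP,
      (dvd_of_mem_normalizedFactors hP).trans (dvd_mul_right _ _)⟩
  have h𝔞prod : ∏ P ∈ s, P ^ n P = 𝔞 := by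
    rw [← Finset.prod_multiset_count_of_subset _ s hsub]
    exact associated_iff_eq.mp (prod_normalizedFactors h𝔞)
  have hy𝔞 : y ∈ 𝔞 := by
    have hinf := IsDedekindDomain.inf_prime_pow_eq_prod s id n hprime
      (fun i _ j _ hij => hij)
    simp only [id_eq] at hinf
    rw [← h𝔞prod, ← hinf, Submodule.mem_finsetInf]
    exact fun P hP => hyP P hP
  have hy0 : y ≠ 0 := by
    have hmu : ¬ IsUnit m := by rwa [Ideal.isUnit_iff]
    obtain ⟨P, hPm⟩ := exists_mem_normalizedFactors hm0 hmu
    have hPs : P ∈ s := by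
      rw [Multiset.mem_toFinset, mem_normalizedFactors_iff ham]
      exact ⟨prime_of_normalized_factor _ hPm,
        (dvd_of_mem_normalizedFactors hPm).trans (dvd_mul_left _ _)⟩
    intro h0
    exact hyP' P hPs (by rw [h0]; exact zero_mem _)
  have hle : Ideal.span {y} ≤ 𝔞 := by
    rw [Ideal.span_le, Set.singleton_subset_iff]; exact hy𝔞
  obtain ⟨𝔠, h𝔠⟩ := Ideal.dvd_iff_le.mpr hle
  refine ⟨𝔠, y, ?_, hy0, h𝔠.symm⟩
  rw [Ideal.isCoprime_iff_sup_eq]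
  by_contra hne
  obtain ⟨M, hM, hsup⟩ := Ideal.exists_le_maximal _ hne
  have hMm : M ∣ m := Ideal.dvd_iff_le.mpr (le_trans le_sup_right hsup)
  have hM0 : M ≠ 0 := by
    rintro rfl; exact hm0 (zero_dvd_iff.mp hMm)
  have hMprime : Prime M := Ideal.prime_of_isPrime (by simpa using hM0) hM.isPrime
  have hMs : M ∈ s := by
    rw [Multiset.mem_toFinset, mem_normalizedFactors_iff ham]
    exact ⟨hMprime, hMm.trans (dvd_mul_left _ _)⟩
  have hdvd : M ^ n M ∣ 𝔞 := by
    have h1 : Multiset.replicate (n M) M ≤ normalizedFactors 𝔞 :=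
      Multiset.le_count_iff_replicate_le.mp le_rfl
    have h2 := Multiset.prod_dvd_prod_of_le h1
    rw [Multiset.prod_replicate] at h2
    exact h2.trans (associated_iff_eq.mp (prod_normalizedFactors h𝔞)).dvd
  have hyM : y ∈ M ^ (n M + 1) := by
    have h1 : Ideal.span {y} ≤ M ^ (n M + 1) := by
      rw [h𝔠, pow_succ]
      exact Ideal.mul_mono (Ideal.le_of_dvd hdvd) (le_trans le_sup_left hsup)
    exact h1 (Ideal.mem_span_singleton_self y)
  exact hyP' M hMs hyM

end AuxDedekind

namespace Grossenchar

variable {E : IntermediateField ℚ ℂ} {m : Ideal (𝓞 E)} {ℓ : ℕ}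

theorem top_coprime : IsCoprime (⊤ : Ideal (𝓞 E)) m := by
  rw [← Ideal.one_eq_top]; exact isCoprime_one_left

theorem fracCoprime_coeIdeal {I : Ideal (𝓞 E)} (h : IsCoprime I m) :
    FracCoprime E m (I : FractionalIdeal (𝓞 E)⁰ E) :=
  ⟨I, ⊤, h, top_coprime, by rw [FractionalIdeal.coeIdeal_top, mul_one]⟩

theorem coprime_ne_zero (hmT : m ≠ ⊤) {I : Ideal (𝓞 E)} (h : IsCoprime I m) : I ≠ 0 := by
  rintro rfl
  rw [isCoprime_zero_left, Ideal.isUnit_iff] at h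
  exact hmT h

theorem psi_mul (ψ : Grossenchar E m ℓ) {I J : Ideal (𝓞 E)} (hI : IsCoprime I m)
    (hJ : IsCoprime J m) :
    ψ.toFun ((I * J : Ideal (𝓞 E)) : FractionalIdeal (𝓞 E)⁰ E)
      = ψ.toFun (I : FractionalIdeal (𝓞 E)⁰ E) * ψ.toFun (J : FractionalIdeal (𝓞 E)⁰ E) := by
  rw [FractionalIdeal.coeIdeal_mul]
  exact ψ.map_mul' _ _ (fracCoprime_coeIdeal hI) (fracCoprime_coeIdeal hJ)

theorem psi_pow (ψ : Grossenchar E m ℓ) {I : Ideal (𝓞 E)} (hI : IsCoprime I m) (n : ℕ) :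
    ψ.toFun ((I ^ n : Ideal (𝓞 E)) : FractionalIdeal (𝓞 E)⁰ E)
      = ψ.toFun (I : FractionalIdeal (𝓞 E)⁰ E) ^ n := by
  induction n with
  | zero =>
    rw [pow_zero, pow_zero, Ideal.one_eq_top, FractionalIdeal.coeIdeal_top]
    exact ψ.map_one'
  | succ k ih =>
    rw [pow_succ, pow_succ, ← ih, psi_mul ψ (hI.pow_left) hI]

theorem isUnit_mk_of_coprime {x : 𝓞 E} (h : IsCoprime (Ideal.span {x}) m) :
    IsUnit (Ideal.Quotient.mk m x) := by
  have hsup := Ideal.isCoprime_iff_sup_eq.mp h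
  have h1 : (1 : 𝓞 E) ∈ Ideal.span {x} ⊔ m := hsup ▸ trivial
  obtain ⟨p, hp, q, hq, hpq⟩ := Submodule.mem_sup.mp h1
  obtain ⟨t, ht⟩ := Ideal.mem_span_singleton'.mp hp
  refine IsUnit.of_mul_eq_one (Ideal.Quotient.mk m t) ?_
  have h2 : (1 : 𝓞 E) - x * t ∈ m := by
    have h3 : (1 : 𝓞 E) - x * t = q := by rw [← hpq, mul_comm x t, ht]; ring
    rw [h3]; exact hq
  rw [← Ideal.Quotient.eq_zero_iff_mem, map_sub, map_one, map_mul] at h2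
  exact (sub_eq_zero.mp h2).symm

theorem coprime_of_isUnit_mk {x : 𝓞 E} (h : IsUnit (Ideal.Quotient.mk m x)) :
    IsCoprime (Ideal.span {x}) m := by
  obtain ⟨t, ht⟩ := h.exists_right_inv
  obtain ⟨w, rfl⟩ := Ideal.Quotient.mk_surjective t
  rw [← map_mul, ← map_one (Ideal.Quotient.mk m), Ideal.Quotient.mk_eq_mk_iff_sub_mem] at ht
  rw [Ideal.isCoprime_iff_sup_eq, Ideal.eq_top_iff_one]
  refine Submodule.mem_sup.mpr ⟨x * w, Ideal.mem_span_singleton'.mpr ⟨w, mul_comm w x⟩,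
    1 - x * w, ?_, by ring⟩
  simpa using (neg_mem ht)

theorem value_mem (ψ : Grossenchar E m ℓ) {𝔟 : Ideal (𝓞 E)} (hcop : IsCoprime 𝔟 m) :
    ψ.toFun (𝔟 : FractionalIdeal (𝓞 E)⁰ E) ∈ ψ.valueField :=
  IntermediateField.subset_adjoin ℚ _ ⟨_, fracCoprime_coeIdeal hcop, rfl⟩

theorem value_ne_zero (ψ : Grossenchar E m ℓ) {𝔟 : Ideal (𝓞 E)} (hcop : IsCoprime 𝔟 m) :
    ψ.toFun (𝔟 : FractionalIdeal (𝓞 E)⁰ E) ≠ 0 :=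
  ψ.ne_zero' _ (fracCoprime_coeIdeal hcop)

theorem value_pow_eq [NumberField E] (ψ : Grossenchar E m ℓ) (hm0 : m ≠ 0)
    {𝔟 : Ideal (𝓞 E)} (hcop : IsCoprime 𝔟 m) (h0 : 𝔟 ≠ 0) :
    ∃ (n : ℕ) (α : 𝓞 E), 0 < n ∧ α ≠ 0 ∧ 𝔟 ^ n = Ideal.span {α} ∧
      ψ.toFun (𝔟 : FractionalIdeal (𝓞 E)⁰ E) ^ n = ((α : E) : ℂ) ^ ℓ := by
  classical
  set h := Fintype.card (ClassGroup (𝓞 E)) with hh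
  have hhpos : 0 < h := Fintype.card_pos
  have h𝔟nz : 𝔟 ∈ (Ideal (𝓞 E))⁰ := mem_nonZeroDivisors_of_ne_zero h0
  have hpowmem : 𝔟 ^ h ∈ (Ideal (𝓞 E))⁰ := pow_mem h𝔟nz h
  have h1 : ClassGroup.mk0 (⟨𝔟 ^ h, hpowmem⟩ : (Ideal (𝓞 E))⁰) = 1 := by
    have heq : (⟨𝔟 ^ h, hpowmem⟩ : (Ideal (𝓞 E))⁰) = (⟨𝔟, h𝔟nz⟩ : (Ideal (𝓞 E))⁰) ^ h :=
      Subtype.ext (by simp [SubmonoidClass.coe_pow])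
    rw [heq, map_pow]
    exact pow_card_eq_one
  have hprin : (𝔟 ^ h).IsPrincipal := (ClassGroup.mk0_eq_one_iff hpowmem).mp h1
  obtain ⟨α₀, hα₀⟩ := hprin.principal
  rw [Ideal.submodule_span_eq] at hα₀
  haveI : Fintype (𝓞 E ⧸ m) := @Fintype.ofFinite _ (Ideal.finiteQuotientOfFreeOfNeBot m hm0)
  set e := Nat.card (𝓞 E ⧸ m)ˣ with he
  have hepos : 0 < e := Nat.card_pos
  have hcop0 : IsCoprime (Ideal.span {α₀}) m := by rw [← hα₀]; exact hcop.pow_left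
  have hu := isUnit_mk_of_coprime hcop0
  have hmk1 : Ideal.Quotient.mk m (α₀ ^ e) = 1 := by
    rw [map_pow, ← IsUnit.unit_spec hu, ← Units.val_pow_eq_pow_val, pow_card_eq_one',
      Units.val_one]
  have hα1 : α₀ ^ e - 1 ∈ m := by
    rw [← Ideal.Quotient.eq_zero_iff_mem, map_sub, map_one, hmk1, sub_self]
  have hspan : 𝔟 ^ (h * e) = Ideal.span {α₀ ^ e} := by
    rw [pow_mul, hα₀, Ideal.span_singleton_pow]
  have hcopα : IsCoprime (Ideal.span {α₀ ^ e}) m := by rw [← hspan]; exact hcop.pow_left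
  have hαne : α₀ ^ e ≠ 0 := by
    intro hz
    have hb : 𝔟 ^ (h * e) = ⊥ := by rw [hspan, hz, Ideal.span_singleton_eq_bot]
    exact pow_ne_zero (h * e) h0 hb
  refine ⟨h * e, α₀ ^ e, Nat.mul_pos hhpos hepos, hαne, hspan, ?_⟩
  rw [← psi_pow ψ hcop (h * e), hspan]
  exact ψ.princ' (α₀ ^ e) hcopα hα1

theorem value_isIntegral [NumberField E] (ψ : Grossenchar E m ℓ) (hm0 : m ≠ 0)
    {𝔟 : Ideal (𝓞 E)} (hcop : IsCoprime 𝔟 m) (h0 : 𝔟 ≠ 0) :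
    IsIntegral ℚ (ψ.toFun (𝔟 : FractionalIdeal (𝓞 E)⁰ E)) := by
  obtain ⟨n, α, hn, hα0, _, hψ⟩ := value_pow_eq ψ hm0 hcop h0
  have h1 : IsIntegral ℤ ((α : E) : ℂ) :=
    map_isIntegral_int (E.val) (RingOfIntegers.isIntegral_coe α)
  have h2 : IsIntegral ℚ (((α : E) : ℂ) ^ ℓ) := (h1.tower_top).pow ℓ
  exact IsIntegral.of_pow hn (hψ ▸ h2)

end Grossenchar

namespace Grossenchar

variable {E : IntermediateField ℚ ℂ} {m : Ideal (𝓞 E)} {ℓ : ℕ}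

theorem valueField_finiteDimensional [NumberField E] (ψ : Grossenchar E m ℓ)
    (hm0 : m ≠ 0) (hmT : m ≠ ⊤) : FiniteDimensional ℚ ψ.valueField := by
  classical
  haveI : Fintype (𝓞 E ⧸ m) := @Fintype.ofFinite _ (Ideal.finiteQuotientOfFreeOfNeBot m hm0)
  -- coprime representatives of ideal classes
  have hrep : ∀ c : ClassGroup (𝓞 E), ∃ 𝔠 : Ideal (𝓞 E), IsCoprime 𝔠 m ∧ 𝔠 ≠ 0 ∧
      ∀ hnz : 𝔠 ∈ (Ideal (𝓞 E))⁰, ClassGroup.mk0 ⟨𝔠, hnz⟩ = c := by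
    intro c
    obtain ⟨I, hI⟩ := ClassGroup.mk0_surjective (R := 𝓞 E) c⁻¹
    have hInz : (I : Ideal (𝓞 E)) ≠ 0 := nonZeroDivisors.ne_zero I.2
    obtain ⟨𝔠, x, hcop, hx0, hmul⟩ := aux_exists_coprime_mul m hm0 hmT hInz
    have h𝔠0 : 𝔠 ≠ 0 := by
      rintro rfl; rw [mul_zero] at hmul
      exact hx0 (Ideal.span_singleton_eq_bot.mp hmul.symm)
    refine ⟨𝔠, hcop, h𝔠0, fun hnz => ?_⟩
    have hmem : (I : Ideal (𝓞 E)) * 𝔠 ∈ (Ideal (𝓞 E))⁰ := mul_mem I.2 hnz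
    have hprin : ((I : Ideal (𝓞 E)) * 𝔠).IsPrincipal := ⟨x, hmul⟩
    have h1 : ClassGroup.mk0 ⟨(I : Ideal (𝓞 E)) * 𝔠, hmem⟩ = 1 :=
      (ClassGroup.mk0_eq_one_iff hmem).mpr hprin
    have h2 : (⟨(I : Ideal (𝓞 E)) * 𝔠, hmem⟩ : (Ideal (𝓞 E))⁰) = I * ⟨𝔠, hnz⟩ :=
      Subtype.ext rfl
    rw [h2, map_mul, hI] at h1
    exact mul_left_cancel (a := c⁻¹)
      (by rw [h1, inv_mul_cancel] : c⁻¹ * ClassGroup.mk0 ⟨𝔠, hnz⟩ = c⁻¹ * c)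
  choose rep hrep1 hrep2 hrep3 using hrep
  choose ul hul using fun v : (𝓞 E ⧸ m)ˣ => Ideal.Quotient.mk_surjective (v : 𝓞 E ⧸ m)
  have hulcop : ∀ v : (𝓞 E ⧸ m)ˣ, IsCoprime (Ideal.span {ul v}) m := fun v =>
    coprime_of_isUnit_mk (by rw [hul v]; exact Units.isUnit v)
  set T : Set ℂ :=
    (Set.range fun c : ClassGroup (𝓞 E) =>
      ψ.toFun ((rep c : Ideal (𝓞 E)) : FractionalIdeal (𝓞 E)⁰ E)) ∪
    (Set.range fun v : (𝓞 E ⧸ m)ˣ =>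
      ψ.toFun ((Ideal.span {ul v} : Ideal (𝓞 E)) : FractionalIdeal (𝓞 E)⁰ E)) with hT
  have hTfin : T.Finite := (Set.finite_range _).union (Set.finite_range _)
  set F : IntermediateField ℚ ℂ := E ⊔ IntermediateField.adjoin ℚ T with hF
  have hEF : E ≤ F := le_sup_left
  have hTF : ∀ z ∈ T, z ∈ F := fun z hz =>
    (le_sup_right : IntermediateField.adjoin ℚ T ≤ F)
      (IntermediateField.subset_adjoin ℚ T hz)
  -- core: values on coprime integral ideals lie in F
  have hcore : ∀ 𝔞 : Ideal (𝓞 E), IsCoprime 𝔞 m →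
      ψ.toFun (𝔞 : FractionalIdeal (𝓞 E)⁰ E) ∈ F := by
    intro 𝔞 hcop𝔞
    have h𝔞0 : 𝔞 ≠ 0 := coprime_ne_zero hmT hcop𝔞
    have h𝔞nz : 𝔞 ∈ (Ideal (𝓞 E))⁰ := mem_nonZeroDivisors_of_ne_zero h𝔞0
    set c := ClassGroup.mk0 (⟨𝔞, h𝔞nz⟩ : (Ideal (𝓞 E))⁰) with hc
    set 𝔠 := rep c⁻¹ with h𝔠def
    have h𝔠cop := hrep1 c⁻¹
    have h𝔠nz : 𝔠 ∈ (Ideal (𝓞 E))⁰ := mem_nonZeroDivisors_of_ne_zero (hrep2 c⁻¹)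
    have hmk : ClassGroup.mk0 ⟨𝔞 * 𝔠, mul_mem h𝔞nz h𝔠nz⟩ = 1 := by
      have h2 : (⟨𝔞 * 𝔠, mul_mem h𝔞nz h𝔠nz⟩ : (Ideal (𝓞 E))⁰)
          = ⟨𝔞, h𝔞nz⟩ * ⟨𝔠, h𝔠nz⟩ := Subtype.ext rfl
      rw [h2, map_mul, hrep3 c⁻¹ h𝔠nz, ← hc, mul_inv_cancel]
    obtain ⟨x, hx⟩ := ((ClassGroup.mk0_eq_one_iff _).mp hmk).principal
    rw [Ideal.submodule_span_eq] at hx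
    have hx0 : x ≠ 0 := by
      intro hz
      rw [hz, Ideal.span_singleton_eq_bot.mpr rfl] at hx
      exact mul_ne_zero h𝔞0 (hrep2 c⁻¹) hx
    have hxcop : IsCoprime (Ideal.span {x}) m := by
      rw [← hx]; exact hcop𝔞.mul_left h𝔠cop
    obtain ⟨u, huspec⟩ := isUnit_mk_of_coprime hxcop
    set w := ul u⁻¹ with hwdef
    have hwcop : IsCoprime (Ideal.span {w}) m := hulcop _
    have hxw1 : x * w - 1 ∈ m := by
      rw [← Ideal.Quotient.eq_zero_iff_mem, map_sub, map_one, map_mul, hul, ← huspec,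
        ← Units.val_mul, mul_inv_cancel, Units.val_one, sub_self]
    have hxwcop : IsCoprime (Ideal.span {x * w}) m := by
      rw [← Ideal.span_singleton_mul_span_singleton]
      exact hxcop.mul_left hwcop
    have e1 : ψ.toFun (𝔞 : FractionalIdeal (𝓞 E)⁰ E)
        * (ψ.toFun ((𝔠 : Ideal (𝓞 E)) : FractionalIdeal (𝓞 E)⁰ E)
            * ψ.toFun ((Ideal.span {w} : Ideal (𝓞 E)) : FractionalIdeal (𝓞 E)⁰ E))
        = (((x * w : 𝓞 E) : E) : ℂ) ^ ℓ := by
      rw [← mul_assoc, ← psi_mul ψ hcop𝔞 h𝔠cop, hx, ← psi_mul ψ hxcop hwcop,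
        Ideal.span_singleton_mul_span_singleton]
      exact ψ.princ' (x * w) hxwcop hxw1
    have hn1 : ψ.toFun ((𝔠 : Ideal (𝓞 E)) : FractionalIdeal (𝓞 E)⁰ E) ≠ 0 :=
      value_ne_zero ψ h𝔠cop
    have hn2 : ψ.toFun ((Ideal.span {w} : Ideal (𝓞 E)) : FractionalIdeal (𝓞 E)⁰ E) ≠ 0 :=
      value_ne_zero ψ hwcop
    have heq : ψ.toFun (𝔞 : FractionalIdeal (𝓞 E)⁰ E)
        = (((x * w : 𝓞 E) : E) : ℂ) ^ ℓ
          * (ψ.toFun ((𝔠 : Ideal (𝓞 E)) : FractionalIdeal (𝓞 E)⁰ E)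
              * ψ.toFun ((Ideal.span {w} : Ideal (𝓞 E)) : FractionalIdeal (𝓞 E)⁰ E))⁻¹ :=
      (eq_mul_inv_iff_mul_eq₀ (mul_ne_zero hn1 hn2)).mpr e1
    rw [heq]
    refine mul_mem (pow_mem (hEF ?_) ℓ)
      (inv_mem (mul_mem (hTF _ (Or.inl ⟨c⁻¹, rfl⟩)) (hTF _ (Or.inr ⟨u⁻¹, rfl⟩))))
    exact ((x * w : 𝓞 E) : E).2
  -- all values lie in F
  have hgen : ψ.toFun '' {J | FracCoprime E m J} ⊆ (F : Set ℂ) := by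
    rintro z ⟨J, hJcp, rfl⟩
    obtain ⟨a, b, ha, hb, hJ⟩ := hJcp
    have h1 : ψ.toFun (J * (b : FractionalIdeal (𝓞 E)⁰ E))
        = ψ.toFun J * ψ.toFun (b : FractionalIdeal (𝓞 E)⁰ E) :=
      ψ.map_mul' _ _ ⟨a, b, ha, hb, hJ⟩ (fracCoprime_coeIdeal hb)
    rw [hJ] at h1
    have hbne : ψ.toFun (b : FractionalIdeal (𝓞 E)⁰ E) ≠ 0 := value_ne_zero ψ hb
    have h2 : ψ.toFun J = ψ.toFun (a : FractionalIdeal (𝓞 E)⁰ E)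
        * (ψ.toFun (b : FractionalIdeal (𝓞 E)⁰ E))⁻¹ :=
      eq_mul_inv_iff_mul_eq₀ hbne |>.mpr h1.symm
    rw [h2]
    exact mul_mem (hcore a ha) (inv_mem (hcore b hb))
  have hle : ψ.valueField ≤ F := IntermediateField.adjoin_le_iff.mpr hgen
  haveI : Finite T := hTfin.to_subtype
  have hint : ∀ x ∈ T, IsIntegral ℚ x := by
    rintro x (⟨c, rfl⟩ | ⟨v, rfl⟩)
    · exact value_isIntegral ψ hm0 (hrep1 c) (hrep2 c)
    · exact value_isIntegral ψ hm0 (hulcop v) (coprime_ne_zero hmT (hulcop v))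
  haveI hfd1 : FiniteDimensional ℚ (IntermediateField.adjoin ℚ T) :=
    IntermediateField.finiteDimensional_adjoin hint
  haveI hfd2 : FiniteDimensional ℚ F := IntermediateField.finiteDimensional_sup _ _
  exact FiniteDimensional.of_injective
    (IntermediateField.inclusion hle).toLinearMap
    (IntermediateField.inclusion_injective hle)

end Grossenchar

namespace Grossenchar

variable {E : IntermediateField ℚ ℂ} {m : Ideal (𝓞 E)} {ℓ : ℕ}

theorem coprime_pow_map_principal [NumberField E] (ψ : Grossenchar E m ℓ) (hm0 : m ≠ 0)
    (hEL : E ≤ ψ.valueField) [NumberField ψ.valueField]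
    {𝔠 : Ideal (𝓞 E)} (hcop : IsCoprime 𝔠 m) (h0 : 𝔠 ≠ 0) :
    ∃ B : 𝓞 ψ.valueField,
      (Ideal.map (NumberField.RingOfIntegers.mapRingHom (IntermediateField.inclusion hEL : E →+* ψ.valueField)) 𝔠) ^ ℓ
        = Ideal.span {B} := by
  obtain ⟨n, α, hn, hα0, hspan, hψ⟩ := value_pow_eq ψ hm0 hcop h0
  set f := NumberField.RingOfIntegers.mapRingHom (IntermediateField.inclusion hEL : E →+* ψ.valueField) with hf
  have hmem : ψ.toFun (𝔠 : FractionalIdeal (𝓞 E)⁰ E) ∈ ψ.valueField := value_mem ψ hcop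
  set β : ψ.valueField := ⟨_, hmem⟩ with hβ
  set γ : 𝓞 ψ.valueField := f α with hγdef
  have hγcoe : ((γ : ψ.valueField) : ℂ) = ((α : E) : ℂ) := by
    rw [hγdef, hf]
    exact IntermediateField.coe_inclusion hEL ((α : E))
  have hβn : β ^ n = ((γ ^ ℓ : 𝓞 ψ.valueField) : ψ.valueField) := by
    apply Subtype.ext
    push_cast
    show ψ.toFun (𝔠 : FractionalIdeal (𝓞 E)⁰ E) ^ n = (((γ : ψ.valueField) : ℂ)) ^ ℓ
    rw [hγcoe]
    exact hψ
  have hint : IsIntegral ℤ β := by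
    refine IsIntegral.of_pow hn ?_
    rw [hβn]
    exact NumberField.RingOfIntegers.isIntegral_coe (γ ^ ℓ)
  set B : 𝓞 ψ.valueField := ⟨β, hint⟩ with hB
  have hBn : B ^ n = γ ^ ℓ := by
    apply NumberField.RingOfIntegers.ext
    push_cast
    exact hβn
  have hkey : (Ideal.span {B}) ^ n = ((Ideal.map f 𝔠) ^ ℓ) ^ n := by
    rw [Ideal.span_singleton_pow, hBn, ← Ideal.span_singleton_pow, ← pow_mul, mul_comm ℓ n,
      pow_mul]
    have hγspan : Ideal.span {γ} = Ideal.map f (Ideal.span {α}) := by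
      rw [Ideal.map_span, Set.image_singleton, hγdef]
    rw [hγspan, ← hspan, Ideal.map_pow]
  exact ⟨B, (aux_pow_inj hn.ne' hkey).symm⟩

end Grossenchar

/-- For a Grössencharacter `ψ` of `E` of weight `ℓ ≥ 1` with value field
`L = L_ψ`, the extension of any nonzero ideal `𝔞` of `O_E` to the ring of integers `O_L`
becomes principal after raising to the `ℓ`-th power; i.e. the class of `𝔞 O_L` in `Cl(L)`
has order dividing `ℓ`. -/
theorem stmt_1 (E : IntermediateField ℚ ℂ) (hE : IsImagQuad E)
    (m : Ideal (𝓞 E)) (hm : m ≠ 0) (ℓ : ℕ) (hℓ : 1 ≤ ℓ)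
    (ψ : Grossenchar E m ℓ) (hEL : E ≤ ψ.valueField)
    (𝔞 : Ideal (𝓞 E)) (h𝔞 : 𝔞 ≠ 0) :
    ((Ideal.map (NumberField.RingOfIntegers.mapRingHom (IntermediateField.inclusion hEL : E →+* ψ.valueField))
        𝔞) ^ ℓ).IsPrincipal := by
  classical
  haveI hfdE : FiniteDimensional ℚ E := Module.finite_of_finrank_eq_succ (n := 1) (by rw [hE.1])
  haveI : NumberField E := ⟨⟩
  have hℓ0 : ℓ ≠ 0 := by omega
  have hmT : m ≠ ⊤ := by
    intro htop
    subst htop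
    have h1 : FracCoprime E ⊤ (0 : FractionalIdeal (𝓞 E)⁰ E) := by
      refine ⟨0, 1, ?_, isCoprime_one_left, ?_⟩
      · exact isCoprime_zero_left.mpr (Ideal.isUnit_iff.mpr rfl)
      · simp
    have hc0 : IsCoprime (Ideal.span {(0 : 𝓞 E)}) (⊤ : Ideal (𝓞 E)) := by
      rw [Ideal.span_singleton_eq_bot.mpr rfl]
      exact isCoprime_zero_left.mpr (Ideal.isUnit_iff.mpr rfl)
    have h2 := ψ.princ' 0 hc0 (by simp)
    apply ψ.ne_zero' 0 h1
    have hzero : ((Ideal.span {(0 : 𝓞 E)} : Ideal (𝓞 E)) : FractionalIdeal (𝓞 E)⁰ E)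
        = (0 : FractionalIdeal (𝓞 E)⁰ E) := by
      rw [Ideal.span_singleton_eq_bot.mpr rfl]
      simp
    rw [hzero] at h2
    rw [h2]
    push_cast
    exact zero_pow hℓ0
  haveI : FiniteDimensional ℚ ψ.valueField :=
    Grossenchar.valueField_finiteDimensional ψ hm hmT
  haveI : NumberField ψ.valueField := ⟨⟩
  obtain ⟨𝔠, x, hcop, hx0, hmul⟩ := aux_exists_coprime_mul m hm hmT h𝔞
  have h𝔠0 : 𝔠 ≠ 0 := by
    rintro rfl; rw [mul_zero] at hmul
    exact hx0 (Ideal.span_singleton_eq_bot.mp hmul.symm)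
  obtain ⟨B, hB⟩ := Grossenchar.coprime_pow_map_principal ψ hm hEL hcop h𝔠0
  set f := NumberField.RingOfIntegers.mapRingHom (IntermediateField.inclusion hEL : E →+* ψ.valueField) with hf
  have hfinj : Function.Injective f := by
    intro a b hab
    apply NumberField.RingOfIntegers.ext
    have h1 : (IntermediateField.inclusion hEL) (a : E) = (IntermediateField.inclusion hEL) (b : E) :=
      congrArg (algebraMap (𝓞 ψ.valueField) ψ.valueField) hab
    exact IntermediateField.inclusion_injective hEL h1
  have hBne : B ≠ 0 := by
    intro hz
    have hbot : (Ideal.map f 𝔠) ^ ℓ = ⊥ := by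
      rw [hB, hz]
      exact Ideal.span_singleton_eq_bot.mpr rfl
    have hmapne : Ideal.map f 𝔠 ≠ ⊥ := by
      rw [Ne, Ideal.map_eq_bot_iff_of_injective hfinj]
      exact h𝔠0
    exact pow_ne_zero ℓ hmapne hbot
  have hkey : (Ideal.map f 𝔞) ^ ℓ * Ideal.span {B} = Ideal.span {f x ^ ℓ} := by
    rw [← hB, ← mul_pow, ← Ideal.map_mul, hmul, Ideal.map_span, Set.image_singleton,
      Ideal.span_singleton_pow]
  exact aux_isPrincipal_of_mul_span hBne hkey
end
end

section
/- Let ψ be a Grössencharacter of E of modulus m and weight ℓ ≥ 1, with value field L = L_ψ, and set d = [L : E]. Then for every nonzero ideal 𝔞 of O_E, the ideal 𝔞^(ℓ·d) is a principal ideal of O_E. In particular, the exponent of the ideal class group Cl(E) divides ℓ·[L_ψ : E]. -/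
set_option maxHeartbeats 1000000
set_option synthInstance.maxHeartbeats 1000000


noncomputable section

open NumberField IntermediateField
open scoped nonZeroDivisors

variable (E : IntermediateField ℚ ℂ)

section AuxLemmas

open UniqueFactorizationMonoid

theorem my_ideal_pow_inj {R : Type*} [CommRing R] [IsDedekindDomain R] {I J : Ideal R}
    (hI : I ≠ 0) {n : ℕ} (hn : n ≠ 0) (h : I ^ n = J ^ n) : I = J := by
  classical
  have hJ : J ≠ 0 := by
    rintro rfl
    rw [zero_pow hn, pow_eq_zero_iff hn] at h
    exact hI h
  have hnf : normalizedFactors I = normalizedFactors J := by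
    have h2 : n • normalizedFactors I = n • normalizedFactors J := by
      rw [← normalizedFactors_pow, ← normalizedFactors_pow, h]
    ext a
    have := congrArg (Multiset.count a) h2
    rw [Multiset.count_nsmul, Multiset.count_nsmul] at this
    exact Nat.eq_of_mul_eq_mul_left (Nat.pos_of_ne_zero hn) this
  exact associated_iff_eq.mp
    ((prod_normalizedFactors hI).symm.trans (hnf ▸ prod_normalizedFactors hJ))

theorem my_exists_coprime_rep {R : Type*} [CommRing R] [IsDedekindDomain R]
    (I m : Ideal R) (hI : I ≠ 0) (hm : m ≠ 0) :
    ∃ (a : R) (J : Ideal R), a ≠ 0 ∧ J ≠ 0 ∧ IsCoprime J m ∧ Ideal.span {a} = I * J := by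
  classical
  by_cases hT : I * m = ⊤
  · have hIt : I = ⊤ := top_unique (le_trans hT.ge Ideal.mul_le_left)
    refine ⟨1, ⊤, one_ne_zero, top_ne_bot, ?_, by simp [hIt]⟩
    rw [Ideal.isCoprime_iff_sup_eq]
    simp
  have hT0 : I * m ≠ 0 := mul_ne_zero hI hm
  set T := I * m with hTdef
  set s : Finset (Ideal R) := (normalizedFactors T).toFinset with hs
  have hmem : ∀ P ∈ s, P ∈ normalizedFactors T := fun P hP => Multiset.mem_toFinset.mp hP
  have hprime : ∀ P ∈ s, Prime P := fun P hP => prime_of_normalized_factor P (hmem P hP)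
  set n : Ideal R → ℕ := fun P => (normalizedFactors I).count P with hn
  have hex : ∀ P : {x // x ∈ s}, ∃ x ∈ (P : Ideal R) ^ (n P), x ∉ (P : Ideal R) ^ (n P + 1) := by
    rintro ⟨P, hP⟩
    exact Ideal.exists_mem_pow_notMem_pow_succ P (hprime P hP).ne_zero
      (Ideal.isPrime_of_prime (hprime P hP)).ne_top _
  choose xs hxs1 hxs2 using hex
  obtain ⟨a, ha⟩ := IsDedekindDomain.exists_forall_sub_mem_ideal (s := s) id (fun P => n P + 1)
    hprime (fun i _ j _ hij => hij) xs
  have hain : ∀ (P) (hP : P ∈ s), a ∈ P ^ (n P) := by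
    intro P hP
    have h1 := ha P hP
    have : a = xs ⟨P, hP⟩ + (a - xs ⟨P, hP⟩) := by ring
    rw [this]
    exact Ideal.add_mem _ (hxs1 ⟨P, hP⟩) (Ideal.pow_le_pow_right (Nat.le_succ _) h1)
  have hanotin : ∀ (P) (hP : P ∈ s), a ∉ P ^ (n P + 1) := by
    intro P hP hmema
    exact hxs2 ⟨P, hP⟩ (by simpa using Ideal.sub_mem _ hmema (ha P hP))
  obtain ⟨P0, hP0⟩ : ∃ P0, P0 ∈ normalizedFactors T := by
    by_cases h0 : normalizedFactors T = 0
    · exfalso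
      have := prod_normalizedFactors hT0
      rw [h0, Multiset.prod_zero] at this
      exact hT (Ideal.isUnit_iff.mp (this.isUnit isUnit_one))
    · exact Multiset.exists_mem_of_ne_zero h0
  have ha0 : a ≠ 0 := by
    intro h0
    exact hanotin P0 (Multiset.mem_toFinset.mpr hP0) (by simp [h0])
  have hspan0 : Ideal.span {a} ≠ 0 := by
    simpa [Ideal.span_eq_bot] using ha0
  have hcount : ∀ (P : Ideal R) (t : ℕ), Prime P → a ∈ P ^ t →
      t ≤ (normalizedFactors (Ideal.span {a})).count P := by
    intro P t hP hmem'
    rw [Multiset.le_count_iff_replicate_le]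
    have hdvd : P ^ t ∣ Ideal.span {a} := by
      rw [Ideal.dvd_iff_le, Ideal.span_le]
      simpa using hmem'
    have := (dvd_iff_normalizedFactors_le_normalizedFactors (pow_ne_zero _ hP.ne_zero)
      hspan0).mp hdvd
    rwa [normalizedFactors_pow, normalizedFactors_irreducible hP.irreducible,
      normalize_eq, Multiset.nsmul_singleton] at this
  have hIdvd : I ∣ Ideal.span {a} := by
    rw [dvd_iff_normalizedFactors_le_normalizedFactors hI hspan0, Multiset.le_iff_count]
    intro P
    rcases Nat.eq_zero_or_pos ((normalizedFactors I).count P) with hc | hc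
    · omega
    have hPf : P ∈ normalizedFactors I := Multiset.count_pos.mp hc
    have hPT : P ∈ s := by
      rw [hs, Multiset.mem_toFinset, Ideal.mem_normalizedFactors_iff hT0]
      obtain ⟨h1, h2⟩ := (Ideal.mem_normalizedFactors_iff hI).mp hPf
      exact ⟨h1, le_trans Ideal.mul_le_left h2⟩
    exact hcount P _ (prime_of_normalized_factor P hPf) (hain P hPT)
  obtain ⟨J, hJ⟩ := hIdvd
  have hJ0 : J ≠ 0 := by
    intro h0
    rw [h0, mul_zero] at hJ
    exact hspan0 hJ
  refine ⟨a, J, ha0, hJ0, ?_, hJ⟩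
  refine Ideal.coprime_of_no_prime_ge ?_
  intro P hJP hmP hP
  have hPb : P ≠ ⊥ := by
    intro h0
    exact hm (le_bot_iff.mp (h0 ▸ hmP))
  have hPs : P ∈ s := by
    rw [hs, Multiset.mem_toFinset, Ideal.mem_normalizedFactors_iff hT0]
    exact ⟨hP, le_trans Ideal.mul_le_right hmP⟩
  have hIle : I ≤ P ^ (n P) := by
    rw [← Ideal.dvd_iff_le]
    rw [dvd_iff_normalizedFactors_le_normalizedFactors (pow_ne_zero _ hPb) hI,
      normalizedFactors_pow,
      normalizedFactors_irreducible (Ideal.prime_of_isPrime hPb hP).irreducible,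
      normalize_eq, Multiset.nsmul_singleton, ← Multiset.le_count_iff_replicate_le]
  have : Ideal.span {a} ≤ P ^ (n P + 1) := by
    rw [hJ, pow_succ]
    exact Ideal.mul_mono hIle hJP
  exact hanotin P hPs (this (Ideal.mem_span_singleton_self a))

end AuxLemmas

theorem my_main_coprime (E : IntermediateField ℚ ℂ) [NumberField E]
    (m : Ideal (𝓞 E)) (hm : m ≠ 0) (ℓ : ℕ)
    (ψ : Grossenchar E m ℓ) (d : ℕ)
    (hd : IntermediateField.relfinrank E ψ.valueField = d)
    (𝔟 : Ideal (𝓞 E)) (h𝔟0 : 𝔟 ≠ 0) (hcop : IsCoprime 𝔟 m)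
    (h𝔟nzd : 𝔟 ∈ (Ideal (𝓞 E))⁰) :
    ClassGroup.mk0 ⟨𝔟, h𝔟nzd⟩ ^ (ℓ * d) = 1 := by
  classical
  -- FracCoprime basics
  have fracCop : ∀ 𝔠 : Ideal (𝓞 E), IsCoprime 𝔠 m →
      FracCoprime E m (𝔠 : FractionalIdeal (𝓞 E)⁰ E) :=
    fun 𝔠 hc => ⟨𝔠, 1, hc, isCoprime_one_left, by simp⟩
  have fracMul : ∀ J J', FracCoprime E m J → FracCoprime E m J' → FracCoprime E m (J * J') := by
    rintro J J' ⟨a, b, hab, hbb, hJ⟩ ⟨a', b', hab', hbb', hJ'⟩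
    refine ⟨a * a', b * b', hab.mul_left hab', hbb.mul_left hbb', ?_⟩
    rw [FractionalIdeal.coeIdeal_mul, FractionalIdeal.coeIdeal_mul]
    calc J * J' * (↑b * ↑b') = (J * ↑b) * (J' * ↑b') := by ring
    _ = ↑a * ↑a' := by rw [hJ, hJ']
  have fracPow : ∀ (J) (n : ℕ), FracCoprime E m J → FracCoprime E m (J ^ n) := by
    intro J n hJ
    induction n with
    | zero => exact ⟨1, 1, isCoprime_one_left, isCoprime_one_left, by simp⟩
    | succ n ih => rw [pow_succ]; exact fracMul _ _ ih hJ
  have psiPow : ∀ (J) (n : ℕ), FracCoprime E m J → ψ.toFun (J ^ n) = ψ.toFun J ^ n := by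
    intro J n hJ
    induction n with
    | zero => simpa using ψ.map_one'
    | succ n ih =>
        rw [pow_succ, pow_succ, ψ.map_mul' _ _ (fracPow J n hJ) hJ, ih]
  -- class group and quotient cardinalities
  set h := Fintype.card (ClassGroup (𝓞 E)) with hh
  have hmemh : 𝔟 ^ h ∈ (Ideal (𝓞 E))⁰ := pow_mem h𝔟nzd h
  have hprinc : (𝔟 ^ h).IsPrincipal := by
    rw [← ClassGroup.mk0_eq_one_iff hmemh]
    have : (⟨𝔟 ^ h, hmemh⟩ : (Ideal (𝓞 E))⁰) = ⟨𝔟, h𝔟nzd⟩ ^ h :=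
      Subtype.ext (by rw [SubmonoidClass.coe_pow])
    rw [this, map_pow, pow_card_eq_one]
  obtain ⟨β, hβ⟩ := hprinc.principal
  have hβI : 𝔟 ^ h = Ideal.span {β} := by simpa using hβ
  have hβ0 : β ≠ 0 := by
    intro h0
    apply pow_ne_zero h h𝔟0
    rw [hβI, h0]
    simp
  have hβcop : IsCoprime (Ideal.span {β}) m := hβI ▸ hcop.pow_left
  -- the unit group of the quotient
  haveI : Fintype (𝓞 E ⧸ m) := @Fintype.ofFinite _ (Ideal.finiteQuotientOfFreeOfNeBot m hm)
  haveI : Finite ((𝓞 E ⧸ m)ˣ) := inferInstance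
  set k := Nat.card ((𝓞 E ⧸ m)ˣ) with hk
  have hβunit : IsUnit (Ideal.Quotient.mk m β) := by
    obtain ⟨i, hi, j, hj, hij⟩ := Ideal.isCoprime_iff_exists.mp hβcop
    obtain ⟨t, rfl⟩ := Ideal.mem_span_singleton.mp hi
    refine IsUnit.of_mul_eq_one (Ideal.Quotient.mk m t) ?_
    rw [← map_mul]
    have : β * t = 1 - j := by linear_combination hij
    rw [this, map_sub, map_one, Ideal.Quotient.eq_zero_iff_mem.mpr hj, sub_zero]
  have hβk1 : β ^ k - 1 ∈ m := by
    have h1 : (Ideal.Quotient.mk m β) ^ k = 1 := by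
      calc (Ideal.Quotient.mk m β) ^ k = ↑(hβunit.unit ^ k) := by
            rw [Units.val_pow_eq_pow_val, IsUnit.unit_spec]
      _ = 1 := by rw [pow_card_eq_one']; rfl
    exact Ideal.Quotient.eq.mp (by rw [map_pow, map_one]; exact h1)
  have hβkcop : IsCoprime (Ideal.span {β ^ k}) m := by
    rw [← Ideal.span_singleton_pow]
    exact hβcop.pow_left
  -- the key complex number identity
  set N := h * k with hN
  have hN0 : N ≠ 0 := by
    have h1 : 0 < h := Fintype.card_pos
    have h2 : 0 < k := Nat.card_pos
    positivity
  have h𝔟N : 𝔟 ^ N = Ideal.span {β ^ k} := by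
    rw [hN, pow_mul, hβI, Ideal.span_singleton_pow]
  set xC := ψ.toFun (𝔟 : FractionalIdeal (𝓞 E)⁰ E) with hxC
  have hxL : xC ∈ ψ.valueField :=
    IntermediateField.subset_adjoin ℚ _ ⟨_, fracCop 𝔟 hcop, rfl⟩
  have hNx : xC ^ N = ((β : E) : ℂ) ^ (k * ℓ) := by
    rw [← psiPow _ N (fracCop 𝔟 hcop), ← FractionalIdeal.coeIdeal_pow, h𝔟N,
      ψ.princ' (β ^ k) hβkcop hβk1]
    have hc1 : ((β ^ k : 𝓞 E) : E) = (β : E) ^ k := by push_cast; ring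
    rw [hc1]
    push_cast
    ring
  -- field theory: norm down to F = E ⊓ L
  set L := ψ.valueField with hL
  set F := E ⊓ L with hF
  have hFL : F ≤ L := inf_le_right
  set M := IntermediateField.extendScalars hFL with hM
  have hdM : Module.finrank F M = d := by
    rw [← IntermediateField.relfinrank_eq_finrank_of_le hFL,
      IntermediateField.inf_relfinrank_right, hd]
  have hbE : ((β : E) : ℂ) ^ (k * ℓ) ∈ E := pow_mem (β : E).2 _
  have hbL : ((β : E) : ℂ) ^ (k * ℓ) ∈ L := hNx ▸ pow_mem hxL N
  set bF : F := ⟨((β : E) : ℂ) ^ (k * ℓ), IntermediateField.mem_inf.mpr ⟨hbE, hbL⟩⟩ with hbF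
  set xM : M := ⟨xC, (IntermediateField.mem_extendScalars hFL).mpr hxL⟩ with hxM
  have hxMN : xM ^ N = algebraMap F M bF := by
    apply Subtype.ext
    push_cast
    exact hNx
  set y := Algebra.norm F xM with hy
  have hyN : y ^ N = bF ^ d := by
    rw [hy, ← map_pow, hxMN, Algebra.norm_algebraMap, hdM]
  have hyE : (y : ℂ) ∈ E := (IntermediateField.mem_inf.mp y.2).1
  set yE : E := ⟨(y : ℂ), hyE⟩ with hyEdef
  have hyEN : yE ^ N = (algebraMap (𝓞 E) E β) ^ (k * ℓ * d) := by
    apply Subtype.ext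
    have := congrArg (fun z : F => (z : ℂ)) hyN
    push_cast at this ⊢
    rw [this]
    ring
  -- fractional ideal computation
  set B := (𝔟 : FractionalIdeal (𝓞 E)⁰ E) with hB
  have hexp : h * (k * ℓ * d) = (ℓ * d) * N := by rw [hN]; ring
  have hspan : FractionalIdeal.spanSingleton (𝓞 E)⁰ yE ^ N = (B ^ (ℓ * d)) ^ N := by
    rw [FractionalIdeal.spanSingleton_pow, hyEN, ← FractionalIdeal.spanSingleton_pow,
      ← FractionalIdeal.coeIdeal_span_singleton, ← hβI, FractionalIdeal.coeIdeal_pow,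
      ← hB, ← pow_mul, ← pow_mul, hexp]
  obtain ⟨⟨aR, c⟩, hc⟩ := IsLocalization.surj (𝓞 E)⁰ (yE : E)
  have hc0 : (c : 𝓞 E) ≠ 0 := nonZeroDivisors.coe_ne_zero c
  have hcs0 : (Ideal.span {(c : 𝓞 E)} : Ideal (𝓞 E)) ≠ 0 := by
    simpa [Ideal.span_eq_bot] using hc0
  have hIdeq : (𝔟 ^ (ℓ * d) * Ideal.span {(c : 𝓞 E)}) ^ N = (Ideal.span {aR}) ^ N := by
    apply FractionalIdeal.coeIdeal_injective (K := E)
    show (((𝔟 ^ (ℓ * d) * Ideal.span {(c : 𝓞 E)}) ^ N : Ideal (𝓞 E)) : FractionalIdeal (𝓞 E)⁰ E)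
      = ((Ideal.span {aR} ^ N : Ideal (𝓞 E)) : FractionalIdeal (𝓞 E)⁰ E)
    rw [FractionalIdeal.coeIdeal_pow, FractionalIdeal.coeIdeal_pow,
      FractionalIdeal.coeIdeal_mul, FractionalIdeal.coeIdeal_pow,
      FractionalIdeal.coeIdeal_span_singleton, FractionalIdeal.coeIdeal_span_singleton,
      mul_pow, ← hB, ← hspan, ← mul_pow, FractionalIdeal.spanSingleton_mul_spanSingleton,
      hc]
  have hIdeq2 : 𝔟 ^ (ℓ * d) * Ideal.span {(c : 𝓞 E)} = Ideal.span {aR} :=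
    my_ideal_pow_inj (mul_ne_zero (pow_ne_zero _ h𝔟0) hcs0) hN0 hIdeq
  have haR0 : (Ideal.span {aR} : Ideal (𝓞 E)) ≠ 0 := by
    rw [← hIdeq2]
    exact mul_ne_zero (pow_ne_zero _ h𝔟0) hcs0
  -- conclude in the class group
  have hmem1 : Ideal.span {aR} ∈ (Ideal (𝓞 E))⁰ :=
    mem_nonZeroDivisors_of_ne_zero haR0
  have hmem2 : Ideal.span {(c : 𝓞 E)} ∈ (Ideal (𝓞 E))⁰ :=
    mem_nonZeroDivisors_of_ne_zero hcs0
  have e1 : ClassGroup.mk0 ⟨Ideal.span {aR}, hmem1⟩ = 1 :=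
    (ClassGroup.mk0_eq_one_iff hmem1).mpr ⟨⟨aR, rfl⟩⟩
  have e2 : ClassGroup.mk0 ⟨Ideal.span {(c : 𝓞 E)}, hmem2⟩ = 1 :=
    (ClassGroup.mk0_eq_one_iff hmem2).mpr ⟨⟨(c : 𝓞 E), rfl⟩⟩
  have e3 : (⟨𝔟, h𝔟nzd⟩ : (Ideal (𝓞 E))⁰) ^ (ℓ * d) * ⟨Ideal.span {(c : 𝓞 E)}, hmem2⟩
      = ⟨Ideal.span {aR}, hmem1⟩ := by
    apply Subtype.ext
    rw [Submonoid.coe_mul, SubmonoidClass.coe_pow]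
    exact hIdeq2
  have := congrArg ClassGroup.mk0 e3
  rw [map_mul, map_pow, e1, e2, mul_one] at this
  exact this

/-- For a Grössencharacter `ψ` of `E` of weight `ℓ ≥ 1` with value field
`L = L_ψ` and `d = [L : E]`, every nonzero ideal `𝔞` of `O_E` satisfies that `𝔞 ^ (ℓ·d)`
is principal; in particular the exponent of `Cl(E)` divides `ℓ·d`. -/
theorem stmt_2 (E : IntermediateField ℚ ℂ) (hE : IsImagQuad E)
    (m : Ideal (𝓞 E)) (hm : m ≠ 0) (ℓ : ℕ) (hℓ : 1 ≤ ℓ)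
    (ψ : Grossenchar E m ℓ) (d : ℕ)
    (hd : IntermediateField.relfinrank E ψ.valueField = d) :
    (∀ 𝔞 : Ideal (𝓞 E), 𝔞 ≠ 0 → (𝔞 ^ (ℓ * d)).IsPrincipal) ∧
      Monoid.exponent (ClassGroup (𝓞 E)) ∣ ℓ * d := by
  haveI : FiniteDimensional ℚ E := FiniteDimensional.of_finrank_pos (by rw [hE.1]; omega)
  haveI : NumberField E := ⟨⟩
  have key : ∀ 𝔞 : Ideal (𝓞 E), 𝔞 ≠ 0 → (𝔞 ^ (ℓ * d)).IsPrincipal := by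
    intro 𝔞 h𝔞
    obtain ⟨a, J, ha0, hJ0, hJcop, hspan⟩ := my_exists_coprime_rep 𝔞 m h𝔞 hm
    have hJnzd : J ∈ (Ideal (𝓞 E))⁰ := mem_nonZeroDivisors_of_ne_zero hJ0
    have h𝔞nzd : 𝔞 ∈ (Ideal (𝓞 E))⁰ := mem_nonZeroDivisors_of_ne_zero h𝔞
    have hmema : Ideal.span {a} ∈ (Ideal (𝓞 E))⁰ :=
      mem_nonZeroDivisors_of_ne_zero (by simpa [Ideal.span_eq_bot] using ha0)
    have hJpow : ClassGroup.mk0 ⟨J, hJnzd⟩ ^ (ℓ * d) = 1 :=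
      my_main_coprime E m hm ℓ ψ d hd J hJ0 hJcop hJnzd
    have e3 : (⟨𝔞, h𝔞nzd⟩ : (Ideal (𝓞 E))⁰) * ⟨J, hJnzd⟩ = ⟨Ideal.span {a}, hmema⟩ :=
      Subtype.ext hspan.symm
    have e1 : ClassGroup.mk0 ⟨Ideal.span {a}, hmema⟩ = 1 :=
      (ClassGroup.mk0_eq_one_iff hmema).mpr ⟨⟨a, rfl⟩⟩
    have e2 := congrArg ClassGroup.mk0 e3
    rw [map_mul, e1] at e2
    have e4 : ClassGroup.mk0 ⟨𝔞, h𝔞nzd⟩ ^ (ℓ * d) = 1 := by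
      have e5 : ClassGroup.mk0 ⟨𝔞, h𝔞nzd⟩ = (ClassGroup.mk0 ⟨J, hJnzd⟩)⁻¹ :=
        eq_inv_of_mul_eq_one_left (mul_comm (ClassGroup.mk0 ⟨𝔞, h𝔞nzd⟩) _ ▸ e2)
      rw [e5, inv_pow, hJpow, inv_one]
    have hmempow : 𝔞 ^ (ℓ * d) ∈ (Ideal (𝓞 E))⁰ := pow_mem h𝔞nzd _
    rw [← ClassGroup.mk0_eq_one_iff hmempow]
    have : (⟨𝔞 ^ (ℓ * d), hmempow⟩ : (Ideal (𝓞 E))⁰) = ⟨𝔞, h𝔞nzd⟩ ^ (ℓ * d) :=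
      Subtype.ext (by rw [SubmonoidClass.coe_pow])
    rw [this, map_pow]
    exact e4
  refine ⟨key, Monoid.exponent_dvd_of_forall_pow_eq_one ?_⟩
  intro g
  obtain ⟨I, rfl⟩ := ClassGroup.mk0_surjective g
  have hI0 : (I : Ideal (𝓞 E)) ≠ 0 := nonZeroDivisors.coe_ne_zero I
  have := key I hI0
  have hmempow : (I : Ideal (𝓞 E)) ^ (ℓ * d) ∈ (Ideal (𝓞 E))⁰ := pow_mem I.2 _
  have h1 : ClassGroup.mk0 ⟨(I : Ideal (𝓞 E)) ^ (ℓ * d), hmempow⟩ = 1 :=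
    (ClassGroup.mk0_eq_one_iff hmempow).mpr this
  have h2 : (⟨(I : Ideal (𝓞 E)) ^ (ℓ * d), hmempow⟩ : (Ideal (𝓞 E))⁰) = I ^ (ℓ * d) :=
    Subtype.ext (by rw [SubmonoidClass.coe_pow])
  rw [h2, map_pow] at h1
  exact h1
end
end

section
/- Let ψ be a Grössencharacter of E of modulus m and weight ℓ ≥ 1, and let r be the order of its modulus character η_ψ. Let L₀ be the subfield of ℂ generated by the values ψ(𝔞) as 𝔞 ranges over all principal fractional ideals of E coprime to m. Then L₀ equals the compositum inside ℂ of E and the r-th cyclotomic field ℚ(e^{2πi/r}). -/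
set_option maxHeartbeats 1000000


noncomputable section

open NumberField IntermediateField
open scoped nonZeroDivisors

variable (E : IntermediateField ℚ ℂ)

section MyHelpers

variable {E : IntermediateField ℚ ℂ} [NumberField E] {m : Ideal (𝓞 E)} {ℓ : ℕ}

omit [NumberField E] in
lemma my_coprime_ne_zero (hmt : m ≠ ⊤) {α : 𝓞 E} (h : IsCoprime (Ideal.span {α}) m) :
    α ≠ 0 := by
  rintro rfl
  rw [Ideal.isCoprime_iff_sup_eq] at h
  apply hmt
  simpa [Ideal.span_singleton_eq_bot.mpr rfl] using h

lemma my_fracCoprime_span {α : 𝓞 E} (h : IsCoprime (Ideal.span {α}) m) :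
    FracCoprime E m ((Ideal.span {α} : Ideal (𝓞 E)) : FractionalIdeal (𝓞 E)⁰ E) :=
  ⟨Ideal.span {α}, 1, h, isCoprime_one_left, by simp⟩

lemma my_m_ne_top (ψ : Grossenchar E m ℓ) (hℓ : 1 ≤ ℓ) : m ≠ ⊤ := by
  intro h
  subst h
  have hc : IsCoprime (Ideal.span {(0 : 𝓞 E)}) (⊤ : Ideal (𝓞 E)) :=
    Ideal.isCoprime_iff_sup_eq.mpr (by simp)
  have h1 := ψ.ne_zero' _ (my_fracCoprime_span hc)
  have h2 := ψ.princ' 0 hc (by simp)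
  rw [h2] at h1
  apply h1
  push_cast
  exact zero_pow (by omega)

omit [NumberField E] in
lemma my_one_add_coprime {δ : 𝓞 E} (hδ : δ ∈ m) :
    IsCoprime (Ideal.span {1 + δ}) m ∧ (1 + δ) - 1 ∈ m := by
  constructor
  · rw [Ideal.isCoprime_iff_sup_eq, Ideal.eq_top_iff_one]
    exact Submodule.mem_sup.mpr ⟨1 + δ, Ideal.subset_span rfl, -δ, neg_mem hδ, by ring⟩
  · simpa using hδ

/-- decomposition of a value on a coprime principal integral ideal -/
lemma my_val_eq (ψ : Grossenchar E m ℓ) {r : ℕ}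
    (hmt : m ≠ ⊤)
    (hpow : ∀ α : 𝓞 E, IsCoprime (Ideal.span {α}) m →
      ψ.toFun ((Ideal.span {α} : Ideal (𝓞 E)) : FractionalIdeal (𝓞 E)⁰ E) ^ r
        = ((α : E) : ℂ) ^ (r * ℓ))
    {α : 𝓞 E} (hcop : IsCoprime (Ideal.span {α}) m) :
    ∃ u : ℂ, u ^ r = 1 ∧
      ψ.toFun ((Ideal.span {α} : Ideal (𝓞 E)) : FractionalIdeal (𝓞 E)⁰ E)
        = ((α : E) : ℂ) ^ ℓ * u := by
  have hα : α ≠ 0 := my_coprime_ne_zero hmt hcop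
  have hαc : ((α : E) : ℂ) ≠ 0 := by exact_mod_cast hα
  have hv : ((α : E) : ℂ) ^ ℓ ≠ 0 := pow_ne_zero _ hαc
  set w : ℂ := ψ.toFun ((Ideal.span {α} : Ideal (𝓞 E)) : FractionalIdeal (𝓞 E)⁰ E) with hw
  refine ⟨w / ((α : E) : ℂ) ^ ℓ, ?_, by field_simp⟩
  rw [div_pow, hpow α hcop, ← pow_mul, mul_comm ℓ r, div_self]
  exact pow_ne_zero _ hαc

/-- existence of α ≡ 1 mod m, coprime, with (α^ℓ) nonreal -/
lemma my_exists_good_alpha (hE : IsImagQuad E) (hm : m ≠ 0) (hℓ : 1 ≤ ℓ) :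
    ∃ α : 𝓞 E, IsCoprime (Ideal.span {α}) m ∧ α - 1 ∈ m ∧ (((α : E) : ℂ) ^ ℓ).im ≠ 0 := by
  classical
  -- a nonreal algebraic integer γ
  obtain ⟨z, hz⟩ := hE.2
  obtain ⟨a, b, hb, hab⟩ := IsFractionRing.div_surjective (A := 𝓞 E) (z : E)
  have hγ : ∃ γ : 𝓞 E, ((γ : E) : ℂ).im ≠ 0 := by
    by_contra hcon
    push_neg at hcon
    apply hz
    have ha' : (starRingEnd ℂ) ((a : E) : ℂ) = ((a : E) : ℂ) :=
      Complex.conj_eq_iff_im.mpr (hcon a)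
    have hb' : (starRingEnd ℂ) ((b : E) : ℂ) = ((b : E) : ℂ) :=
      Complex.conj_eq_iff_im.mpr (hcon b)
    have : ((z : E) : ℂ) = ((a : E) : ℂ) / ((b : E) : ℂ) := by
      rw [← hab]; push_cast [NumberField.RingOfIntegers.coe_eq_algebraMap]; rfl
    rw [← Complex.conj_eq_iff_im, this, map_div₀, ha', hb']
  obtain ⟨γ, hγim⟩ := hγ
  set g : ℂ := ((γ : E) : ℂ) with hg
  -- the integer n ∈ m
  set n : ℕ := Ideal.absNorm m with hn
  have hnm : (n : 𝓞 E) ∈ m := Ideal.absNorm_mem m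
  have hn0 : n ≠ 0 := fun h => hm (Ideal.absNorm_eq_zero_iff.mp h)
  -- find good k
  have key : ∃ k ∈ Finset.Icc 1 (ℓ + 1), ((1 + ((k * n : ℕ) : ℂ) * g) ^ ℓ).im ≠ 0 := by
    by_contra hcon
    push_neg at hcon
    -- each a_k is on one of the ℓ lines
    have hk0 : ∀ k ∈ Finset.Icc 1 (ℓ + 1), (1 + ((k * n : ℕ) : ℂ) * g) ≠ 0 := by
      intro k hk h0
      have him : (1 + ((k * n : ℕ) : ℂ) * g).im = (k * n : ℕ) * g.im := by
        simp
      rw [h0] at him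
      simp only [Complex.zero_im] at him
      have : ((k * n : ℕ) : ℝ) ≠ 0 := by
        simp only [ne_eq, Nat.cast_eq_zero, Nat.mul_eq_zero, not_or]
        exact ⟨by simp at hk; omega, hn0⟩
      exact hγim ((mul_eq_zero.mp him.symm).resolve_left this)
    have hmap : ∀ k ∈ Finset.Icc 1 (ℓ + 1),
        (starRingEnd ℂ) (1 + ((k * n : ℕ) : ℂ) * g) / (1 + ((k * n : ℕ) : ℂ) * g)
          ∈ (Polynomial.nthRoots ℓ (1 : ℂ)).toFinset := by
      intro k hk
      rw [Multiset.mem_toFinset, Polynomial.mem_nthRoots (by omega : 0 < ℓ)]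
      have h1 := hcon k hk
      have h2 : (starRingEnd ℂ) ((1 + ((k * n : ℕ) : ℂ) * g) ^ ℓ)
          = (1 + ((k * n : ℕ) : ℂ) * g) ^ ℓ := Complex.conj_eq_iff_im.mpr h1
      rw [map_pow] at h2
      rw [div_pow, h2, div_self (pow_ne_zero _ (hk0 k hk))]
    -- pigeonhole
    have hcard : (Polynomial.nthRoots ℓ (1 : ℂ)).toFinset.card < (Finset.Icc 1 (ℓ + 1)).card := by
      calc (Polynomial.nthRoots ℓ (1 : ℂ)).toFinset.card
          ≤ Multiset.card (Polynomial.nthRoots ℓ (1 : ℂ)) := Multiset.toFinset_card_le _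
        _ ≤ ℓ := Polynomial.card_nthRoots ℓ 1
        _ < (Finset.Icc 1 (ℓ + 1)).card := by rw [Nat.card_Icc]; omega
    obtain ⟨j, hj, k, hk, hjk, heq⟩ :=
      Finset.exists_ne_map_eq_of_card_lt_of_maps_to hcard hmap
    rw [div_eq_div_iff (hk0 j hj) (hk0 k hk)] at heq
    have hconj : ∀ i : ℕ, (starRingEnd ℂ) (1 + ((i * n : ℕ) : ℂ) * g)
        = 1 + ((i * n : ℕ) : ℂ) * (starRingEnd ℂ) g := by
      intro i; simp
    rw [hconj j, hconj k] at heq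
    have hzero : (((j * n : ℕ) : ℂ) - ((k * n : ℕ) : ℂ)) * ((starRingEnd ℂ) g - g) = 0 := by
      linear_combination heq
    rcases mul_eq_zero.mp hzero with h | h
    · have : (j * n : ℕ) = (k * n : ℕ) := by exact_mod_cast sub_eq_zero.mp h
      exact hjk (Nat.eq_of_mul_eq_mul_right (Nat.pos_of_ne_zero hn0) this)
    · exact hγim (Complex.conj_eq_iff_im.mp (sub_eq_zero.mp h))
  obtain ⟨k, hk, hkim⟩ := key
  have hδm : ((k * n : ℕ) : 𝓞 E) * γ ∈ m := by
    have hcast : ((k * n : ℕ) : 𝓞 E) = (k : 𝓞 E) * (n : 𝓞 E) := by push_cast; ring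
    rw [hcast, mul_assoc]
    exact Ideal.mul_mem_left m _ (Ideal.mul_mem_right γ m hnm)
  obtain ⟨hc1, hc2⟩ := my_one_add_coprime (m := m) hδm
  refine ⟨1 + ((k * n : ℕ) : 𝓞 E) * γ, hc1, hc2, ?_⟩
  have hcast : (((1 + ((k * n : ℕ) : 𝓞 E) * γ : 𝓞 E) : E) : ℂ)
      = 1 + ((k * n : ℕ) : ℂ) * g := by push_cast; ring
  rw [hcast]
  exact hkim

end MyHelpers

/-- Let `r` be the order of the modulus character of `ψ`.  The subfield of `ℂ`
generated by the values of `ψ` on principal fractional ideals coprime to `m` is the compositum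
of `E` and the `r`-th cyclotomic field `ℚ(e^{2πi/r})`. -/
theorem stmt_3 (E : IntermediateField ℚ ℂ) [NumberField E] (hE : IsImagQuad E)
    (m : Ideal (𝓞 E)) (hm : m ≠ 0) (ℓ : ℕ) (hℓ : 1 ≤ ℓ)
    (ψ : Grossenchar E m ℓ) (r : ℕ) (hr : ψ.ModCharOrder r) :
    IntermediateField.adjoin ℚ (ψ.toFun ''
        {J | FracCoprime E m J ∧ ∃ x : E, J = FractionalIdeal.spanSingleton (𝓞 E)⁰ x})
      = E ⊔ IntermediateField.adjoin ℚ {Complex.exp (2 * Real.pi * Complex.I / r)} := by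
  classical
  have hmt : m ≠ ⊤ := my_m_ne_top ψ hℓ
  have hr1 : r ≠ 0 := by have := hr.1; omega
  haveI : NeZero r := ⟨hr1⟩
  set ζ : ℂ := Complex.exp (2 * Real.pi * Complex.I / r) with hζdef
  have hζ0 : ζ ≠ 0 := Complex.exp_ne_zero _
  have hprim : IsPrimitiveRoot ζ r := Complex.isPrimitiveRoot_exp r hr1
  set L : IntermediateField ℚ ℂ := IntermediateField.adjoin ℚ (ψ.toFun ''
      {J | FracCoprime E m J ∧ ∃ x : E, J = FractionalIdeal.spanSingleton (𝓞 E)⁰ x}) with hL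
  show L = E ⊔ IntermediateField.adjoin ℚ {ζ}
  -- values on coprime integral principal ideals lie in L
  have hvalL : ∀ α : 𝓞 E, IsCoprime (Ideal.span {α}) m →
      ψ.toFun ((Ideal.span {α} : Ideal (𝓞 E)) : FractionalIdeal (𝓞 E)⁰ E) ∈ L := by
    intro α h
    apply IntermediateField.subset_adjoin
    exact ⟨_, ⟨my_fracCoprime_span h,
      ⟨(α : E), by rw [FractionalIdeal.coeIdeal_span_singleton]⟩⟩, rfl⟩
  -- E ≤ L
  have hEL : E ≤ L := by
    obtain ⟨α, hcop, hmem, him⟩ := my_exists_good_alpha (m := m) hE hm hℓ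
    set x : ℂ := ((α : E) : ℂ) ^ ℓ with hx
    have hxL : x ∈ L := by
      have := hvalL α hcop
      rwa [ψ.princ' α hcop hmem] at this
    have hxE : x ∈ E := pow_mem (SetLike.coe_mem ((α : E))) ℓ
    have hQx_le : IntermediateField.adjoin ℚ {x} ≤ E := by
      rw [IntermediateField.adjoin_le_iff]; simpa using hxE
    have hint : IsIntegral ℚ x := by
      have h1 : IsIntegral ℚ (⟨x, hxE⟩ : E) := IsIntegral.of_finite ℚ _
      exact h1.map E.val
    haveI hfd : FiniteDimensional ℚ (IntermediateField.adjoin ℚ {x} : IntermediateField ℚ ℂ) :=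
      IntermediateField.adjoin.finiteDimensional hint
    have hnb : (IntermediateField.adjoin ℚ {x} : IntermediateField ℚ ℂ) ≠ ⊥ := by
      intro hbot
      have : x ∈ (⊥ : IntermediateField ℚ ℂ) := by
        rw [← hbot]
        exact IntermediateField.subset_adjoin ℚ {x} rfl
      rw [IntermediateField.mem_bot] at this
      obtain ⟨q, hq⟩ := this
      apply him
      rw [← hq]
      simp [eq_ratCast]
    have h2le : 2 ≤ Module.finrank ℚ (IntermediateField.adjoin ℚ {x} : IntermediateField ℚ ℂ) := by
      have hpos : 0 < Module.finrank ℚ (IntermediateField.adjoin ℚ {x} : IntermediateField ℚ ℂ) :=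
        Module.finrank_pos
      have hne1 : Module.finrank ℚ (IntermediateField.adjoin ℚ {x} : IntermediateField ℚ ℂ) ≠ 1 :=
        fun h => hnb (IntermediateField.finrank_eq_one_iff.mp h)
      omega
    have heq : IntermediateField.adjoin ℚ {x} = E :=
      IntermediateField.eq_of_le_of_finrank_le hQx_le (by rw [hE.1]; exact h2le)
    rw [← heq]
    rw [IntermediateField.adjoin_le_iff]
    simpa using hxL
  -- every r-th root of unity is a power of ζ
  have hroot : ∀ u : ℂ, u ^ r = 1 → ∃ nz : ℤ, u = ζ ^ nz := by
    intro u hu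
    have hu0 : u ≠ 0 := by
      intro h
      rw [h, zero_pow hr1] at hu
      exact zero_ne_one hu
    have hpu : IsPrimitiveRoot ((hprim.isUnit hr1).unit) r :=
      hprim.isUnit_unit hr1
    have hmem : Units.mk0 u hu0 ∈ rootsOfUnity r ℂ := by
      rw [mem_rootsOfUnity']
      simpa using hu
    rw [← hpu.zpowers_eq] at hmem
    obtain ⟨nz, hnz⟩ := Subgroup.mem_zpowers_iff.mp hmem
    refine ⟨nz, ?_⟩
    have := congrArg (Units.val) hnz
    rw [Units.val_zpow_eq_zpow_val] at this
    simp only [IsUnit.unit_spec, Units.val_mk0] at this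
    exact this.symm
  -- ζ ∈ L
  have hζL : ζ ∈ L := by
    set S : Set ℂˣ := {u : ℂˣ | (u : ℂ) ^ r = 1 ∧ ((u : ℂ) ∈ L) ∧ ∃ α : 𝓞 E,
      IsCoprime (Ideal.span {α}) m ∧
      ψ.toFun ((Ideal.span {α} : Ideal (𝓞 E)) : FractionalIdeal (𝓞 E)⁰ E)
        = ((α : E) : ℂ) ^ ℓ * (u : ℂ)} with hS
    set H : Subgroup ℂˣ := Subgroup.closure S with hH
    have hHle : H ≤ rootsOfUnity r ℂ :=
      (Subgroup.closure_le _).mpr (fun u hu => (mem_rootsOfUnity' r u).mpr hu.1)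
    haveI hfin : Finite H := by
      have h2 : Set.Finite ((rootsOfUnity r ℂ : Subgroup ℂˣ) : Set ℂˣ) :=
        Set.finite_coe_iff.mp (inferInstanceAs (Finite (rootsOfUnity r ℂ)))
      exact Set.finite_coe_iff.mpr (h2.subset hHle)
    have hdr : ∀ α : 𝓞 E, IsCoprime (Ideal.span {α}) m →
        ψ.toFun ((Ideal.span {α} : Ideal (𝓞 E)) : FractionalIdeal (𝓞 E)⁰ E) ^ (Nat.card H)
          = ((α : E) : ℂ) ^ (Nat.card H * ℓ) := by
      intro α hcop
      obtain ⟨u, hu1, hueq⟩ := my_val_eq ψ hmt hr.2.1 hcop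
      have hu0 : u ≠ 0 := by
        intro h
        rw [h, zero_pow hr1] at hu1
        exact zero_ne_one hu1
      have hαc : ((α : E) : ℂ) ≠ 0 := by exact_mod_cast my_coprime_ne_zero hmt hcop
      have hv : ((α : E) : ℂ) ^ ℓ ≠ 0 := pow_ne_zero _ hαc
      have hUS : (Units.mk0 u hu0) ∈ S := by
        refine ⟨by simpa using hu1, ?_, α, hcop, by simpa using hueq⟩
        have hψL := hvalL α hcop
        have hvL : ((α : E) : ℂ) ^ ℓ ∈ L := pow_mem (hEL (SetLike.coe_mem ((α : E)))) ℓ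
        have : u = ψ.toFun ((Ideal.span {α} : Ideal (𝓞 E)) : FractionalIdeal (𝓞 E)⁰ E)
            * (((α : E) : ℂ) ^ ℓ)⁻¹ := by
          rw [hueq]; field_simp
        rw [Units.val_mk0, this]
        exact mul_mem hψL (inv_mem hvL)
      have hUH : (⟨Units.mk0 u hu0, Subgroup.subset_closure hUS⟩ : H) ^ (Nat.card H) = 1 :=
        pow_card_eq_one'
      have hUd : (Units.mk0 u hu0) ^ (Nat.card H) = 1 := by
        have h1 := congrArg (Subtype.val) hUH
        simpa only [SubmonoidClass.coe_pow, OneMemClass.coe_one] using h1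
      have hud : u ^ (Nat.card H) = 1 := by
        have h2 := congrArg (Units.val) hUd
        simpa only [Units.val_pow_eq_pow_val, Units.val_one, Units.val_mk0] using h2
      rw [hueq, mul_pow, hud, mul_one, ← pow_mul, mul_comm ℓ (Nat.card H)]
    have hd1 : 1 ≤ Nat.card H := Nat.card_pos
    have hrle : r ≤ Nat.card H := hr.2.2 _ hd1 hdr
    have hcardroots : Nat.card (rootsOfUnity r ℂ) = r := by
      exact Complex.card_rootsOfUnity r
    have hHeq : H = rootsOfUnity r ℂ :=
      Subgroup.eq_of_le_of_card_ge hHle (by rw [hcardroots]; exact hrle)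
    have hζH : Units.mk0 ζ hζ0 ∈ H := by
      rw [hHeq, mem_rootsOfUnity']
      simpa using hprim.pow_eq_one
    have : ((Units.mk0 ζ hζ0 : ℂˣ) : ℂ) ∈ L := by
      refine Subgroup.closure_induction (p := fun g _ => ((g : ℂˣ) : ℂ) ∈ L)
        ?_ ?_ ?_ ?_ hζH
      · exact fun x hx => hx.2.1
      · simpa using one_mem L
      · intro x y _ _ hx hy
        rw [Units.val_mul]
        exact mul_mem hx hy
      · intro x _ hx
        rw [Units.val_inv_eq_inv_val]
        exact inv_mem hx
    simpa using this
  -- conclude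
  apply le_antisymm
  · rw [IntermediateField.adjoin_le_iff]
    rintro y ⟨J, ⟨hJc, x, rfl⟩, rfl⟩
    have hvalR : ∀ α : 𝓞 E, IsCoprime (Ideal.span {α}) m →
        ψ.toFun ((Ideal.span {α} : Ideal (𝓞 E)) : FractionalIdeal (𝓞 E)⁰ E)
          ∈ E ⊔ IntermediateField.adjoin ℚ {ζ} := by
      intro α hc
      obtain ⟨u, hu1, hueq⟩ := my_val_eq ψ hmt hr.2.1 hc
      obtain ⟨nz, rfl⟩ := hroot u hu1
      rw [hueq]
      refine mul_mem (pow_mem ?_ ℓ) (zpow_mem ?_ nz)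
      · exact (le_sup_left : E ≤ E ⊔ IntermediateField.adjoin ℚ {ζ})
          (SetLike.coe_mem ((α : E)))
      · exact (le_sup_right : IntermediateField.adjoin ℚ {ζ} ≤ E ⊔ IntermediateField.adjoin ℚ {ζ})
          (IntermediateField.subset_adjoin ℚ {ζ} rfl)
    obtain ⟨a', b', ha', hb', hJb⟩ := hJc
    have hsup : (1 : 𝓞 E) ∈ b' ⊔ m := by
      rw [Ideal.isCoprime_iff_sup_eq.mp hb']
      trivial
    obtain ⟨c, hcb, μ, hμ, hcμ⟩ := Submodule.mem_sup.mp hsup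
    have hbcop : IsCoprime (Ideal.span {c}) m := by
      rw [Ideal.isCoprime_iff_sup_eq, Ideal.eq_top_iff_one]
      exact Submodule.mem_sup.mpr ⟨c, Ideal.subset_span rfl, μ, hμ, hcμ⟩
    have hxmem : (x : E) ∈ FractionalIdeal.spanSingleton (𝓞 E)⁰ (x : E) :=
      FractionalIdeal.mem_spanSingleton_self _ _
    have hcmem : algebraMap (𝓞 E) E c ∈ (b' : FractionalIdeal (𝓞 E)⁰ E) :=
      FractionalIdeal.mem_coeIdeal_of_mem _ hcb
    have hprod := FractionalIdeal.mul_mem_mul hxmem hcmem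
    rw [hJb] at hprod
    obtain ⟨β, hβa, hβ⟩ := (FractionalIdeal.mem_coeIdeal _).mp hprod
    have hspan : FractionalIdeal.spanSingleton (𝓞 E)⁰ (x : E)
        * ((Ideal.span {c} : Ideal (𝓞 E)) : FractionalIdeal (𝓞 E)⁰ E)
        = ((Ideal.span {β} : Ideal (𝓞 E)) : FractionalIdeal (𝓞 E)⁰ E) := by
      rw [FractionalIdeal.coeIdeal_span_singleton, FractionalIdeal.coeIdeal_span_singleton,
        FractionalIdeal.spanSingleton_mul_spanSingleton]
      exact congrArg _ hβ.symm
    have hIdeq : (Ideal.span {β} * b' : Ideal (𝓞 E)) = a' * Ideal.span {c} := by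
      apply FractionalIdeal.coeIdeal_injective (K := E)
      push_cast [FractionalIdeal.coeIdeal_mul]
      rw [← hspan, ← hJb]
      ring
    have hβcop : IsCoprime (Ideal.span {β}) m := by
      rw [Ideal.isCoprime_iff_sup_eq, eq_top_iff]
      calc (⊤ : Ideal (𝓞 E)) = (a' * Ideal.span {c}) ⊔ m :=
            (Ideal.isCoprime_iff_sup_eq.mp (ha'.mul_left hbcop)).symm
        _ = (Ideal.span {β} * b') ⊔ m := by rw [hIdeq]
        _ ≤ Ideal.span {β} ⊔ m := sup_le_sup_right Ideal.mul_le_left _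
    have hmul := ψ.map_mul' _ _ ⟨a', b', ha', hb', hJb⟩ (my_fracCoprime_span hbcop)
    rw [hspan] at hmul
    have hb0 : ψ.toFun ((Ideal.span {c} : Ideal (𝓞 E)) : FractionalIdeal (𝓞 E)⁰ E) ≠ 0 :=
      ψ.ne_zero' _ (my_fracCoprime_span hbcop)
    have hval : ψ.toFun (FractionalIdeal.spanSingleton (𝓞 E)⁰ (x : E))
        = ψ.toFun ((Ideal.span {β} : Ideal (𝓞 E)) : FractionalIdeal (𝓞 E)⁰ E)
          * (ψ.toFun ((Ideal.span {c} : Ideal (𝓞 E)) : FractionalIdeal (𝓞 E)⁰ E))⁻¹ := by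
      rw [hmul]
      exact (mul_inv_cancel_right₀ hb0 _).symm
    rw [hval]
    exact mul_mem (hvalR β hβcop) (inv_mem (hvalR c hbcop))
  · refine sup_le hEL ?_
    rw [IntermediateField.adjoin_le_iff]
    simpa using hζL
end
end
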